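/- arXiv:1808.08884 — 4 statements merged into one kernel-verified Lean document; each statement's English description precedes it below -/
import Mathlib

section
/- Let ρ be an n×n density matrix with eigenvalue vector λ(ρ), and let p ∈ ℝⁿ be a probability vector with p ≺ λ(ρ). Then there exists a von Neumann measurement, i.e., an orthonormal basis {|ψ_1⟩,…,|ψ_n⟩} of ℂⁿ, such that ⟨ψ_i|ρ|ψ_i⟩ = p_i for all i = 1,…,n. -/
open Matrix Finset ComplexOrder

/-- The vector `x` sorted in descending order. -/
noncomputable def sortDesc {n : ℕ} (x : Fin n → ℝ) : Fin n → ℝ :=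
  fun i => x (Tuple.sort x i.rev)

/-- The sum of the `k` largest entries of `x`. -/
noncomputable def topSum {n : ℕ} (x : Fin n → ℝ) (k : ℕ) : ℝ :=
  ∑ i ∈ Finset.univ.filter (fun i : Fin n => (i : ℕ) < k), sortDesc x i

/-- `Maj b a` means `b ≺ a`, i.e. `a` majorizes `b`. -/
def Maj {n : ℕ} (b a : Fin n → ℝ) : Prop := ∀ k : ℕ, topSum b k ≤ topSum a k

/-- `p` is a probability vector. -/
def IsProbVec {n : ℕ} (p : Fin n → ℝ) : Prop := (∀ i, 0 ≤ p i) ∧ ∑ i, p i = 1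

/-- Shannon entropy (base 2). -/
noncomputable def shannon {ι : Type*} [Fintype ι] (p : ι → ℝ) : ℝ :=
  -∑ i, p i * Real.logb 2 (p i)

/-- A von Neumann measurement: an orthonormal basis of `ℂⁿ`. -/
def IsONB {n : ℕ} (ψ : Fin n → (Fin n → ℂ)) : Prop :=
  ∀ i j, star (ψ i) ⬝ᵥ ψ j = if i = j then 1 else 0

/-- Outcome distribution of the measurement `ψ` on the state `ρ`. -/
noncomputable def outcome {n : ℕ} (ρ : Matrix (Fin n) (Fin n) ℂ)
    (ψ : Fin n → (Fin n → ℂ)) : Fin n → ℝ :=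
  fun i => (star (ψ i) ⬝ᵥ (ρ *ᵥ ψ i)).re

/-- Vector of diagonal entries of `ρ` (real parts). -/
noncomputable def diagVec {n : ℕ} (ρ : Matrix (Fin n) (Fin n) ℂ) : Fin n → ℝ :=
  fun i => (ρ i i).re

/-- `c` is the majorization join of `a` and `b`. -/
def IsMajJoin {n : ℕ} (a b c : Fin n → ℝ) : Prop :=
  IsProbVec c ∧ Maj a c ∧ Maj b c ∧
    ∀ c', IsProbVec c' → Maj a c' → Maj b c' → Maj c c'

/-- `c` is the majorization meet of the set `X`. -/
def IsMajMeet {n : ℕ} (X : Set (Fin n → ℝ)) (c : Fin n → ℝ) : Prop :=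
  IsProbVec c ∧ (∀ p ∈ X, Maj c p) ∧
    ∀ c', IsProbVec c' → (∀ p ∈ X, Maj c' p) → Maj c' c


-- Auxiliary development: Schur--Horn theorem
section SchurHornAux

noncomputable def psum {n : ℕ} (x : Fin n → ℝ) (k : ℕ) : ℝ :=
  ∑ i ∈ Finset.univ.filter (fun i : Fin n => (i : ℕ) < k), x i

lemma psum_eq_sum_ite {n : ℕ} (x : Fin n → ℝ) (k : ℕ) :
    psum x k = ∑ i : Fin n, if (i : ℕ) < k then x i else 0 := by
  rw [psum, Finset.sum_filter]

lemma psum_of_le {n : ℕ} (x : Fin n → ℝ) {k : ℕ} (h : n ≤ k) :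
    psum x k = ∑ i, x i := by
  rw [psum]; congr 1
  exact Finset.filter_true_of_mem (fun i _ => lt_of_lt_of_le i.isLt h)

lemma psum_one {n : ℕ} (x : Fin (n+1) → ℝ) : psum x 1 = x 0 := by
  rw [psum_eq_sum_ite, Fin.sum_univ_succ]; simp

lemma psum_succ_comp {n : ℕ} (x : Fin (n+1) → ℝ) (k : ℕ) :
    psum (x ∘ Fin.succ) k = psum x (k+1) - x 0 := by
  rw [psum_eq_sum_ite, psum_eq_sum_ite, Fin.sum_univ_succ]
  simp [Nat.succ_lt_succ_iff]

lemma sum_dotProduct' {ι : Type*} {N : ℕ} (s : Finset ι) (f : ι → (Fin N → ℝ))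
    (v : Fin N → ℝ) : (∑ m ∈ s, f m) ⬝ᵥ v = ∑ m ∈ s, (f m ⬝ᵥ v) := by
  simp only [dotProduct, Finset.sum_apply, Finset.sum_mul]
  exact Finset.sum_comm

lemma dotProduct_sum' {ι : Type*} {N : ℕ} (s : Finset ι) (v : Fin N → ℝ)
    (f : ι → (Fin N → ℝ)) : v ⬝ᵥ (∑ m ∈ s, f m) = ∑ m ∈ s, (v ⬝ᵥ f m) := by
  simp only [dotProduct, Finset.sum_apply, Finset.mul_sum]
  exact Finset.sum_comm

lemma hornSorted : ∀ n (a p : Fin n → ℝ), Antitone a → Antitone p →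
    (∀ k, psum p k ≤ psum a k) → (∑ i, p i = ∑ i, a i) →
    ∃ U : Matrix (Fin n) (Fin n) ℝ,
      (∀ i i', U i ⬝ᵥ U i' = if i = i' then (1:ℝ) else 0) ∧
      (∀ i, ∑ k, (U i k)^2 * a k = p i) := by
  intro n
  induction n with
  | zero => exact fun a p _ _ _ _ => ⟨1, fun i => i.elim0, fun i => i.elim0⟩
  | succ n IH =>
    intro a p ha hp hpre hsum
    by_cases hall : ∀ i, p 0 ≤ a i
    · -- then p = a
      have hap : ∀ i, p i = a i := by
        have h0 : ∀ i ∈ Finset.univ, (0:ℝ) ≤ a i - p i := by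
          intro i _
          have : p i ≤ p 0 := hp (Fin.zero_le i)
          linarith [hall i]
        have hs : ∑ i, (a i - p i) = 0 := by
          rw [Finset.sum_sub_distrib]; linarith
        intro i
        have := (Finset.sum_eq_zero_iff_of_nonneg h0).mp hs i (Finset.mem_univ i)
        linarith
      refine ⟨1, ?_, ?_⟩
      · intro i i'
        have : (1 : Matrix (Fin (n+1)) (Fin (n+1)) ℝ) i = Pi.single i 1 := by
          funext k; simp [Matrix.one_apply, Pi.single_apply, eq_comm]
        simp [this, single_dotProduct, Pi.single_apply, Matrix.one_apply, eq_comm]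
      · intro i
        have h1 : ∀ k, ((1 : Matrix (Fin (n+1)) (Fin (n+1)) ℝ) i k)^2 * a k
            = if i = k then a i else 0 := by
          intro k
          by_cases h : i = k <;> simp [Matrix.one_apply, h]
        rw [Finset.sum_congr rfl (fun k _ => h1 k), Finset.sum_ite_eq univ i (fun _ => a i)]
        simp [hap i]
    · push_neg at hall
      -- find the crossing index j : a j.castSucc ≥ p 0 > a j.succ
      obtain ⟨j, hjc, hjs⟩ : ∃ j : Fin n, p 0 ≤ a j.castSucc ∧ a j.succ < p 0 := by
        classical
        set S := Finset.univ.filter (fun i : Fin (n+1) => a i < p 0) with hS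
        have hSne : S.Nonempty := by
          obtain ⟨i, hi⟩ := hall
          exact ⟨i, by simp [hS, hi]⟩
        set m := S.min' hSne with hm
        have hmS : m ∈ S := S.min'_mem hSne
        have ham : a m < p 0 := by simpa [hS] using hmS
        have hm0 : m ≠ 0 := by
          intro h
          have h01 : p 0 ≤ a 0 := by
            have := hpre 1
            rwa [psum_one, psum_one] at this
          rw [h] at ham; linarith
        refine ⟨m.pred hm0, ?_, ?_⟩
        · by_contra hcon
          push_neg at hcon
          have hmem : (m.pred hm0).castSucc ∈ S := by simp [hS, hcon]
          have := S.min'_le _ hmem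
          have hlt : (m.pred hm0).castSucc < m := by
            have := (m.pred hm0).castSucc_lt_succ
            rwa [Fin.succ_pred] at this
          rw [← hm] at this
          exact absurd this (not_le.mpr hlt)
        · rwa [Fin.succ_pred]
      set jc := j.castSucc with hjcdef
      set js := j.succ with hjsdef
      set t := p 0 with htdef
      set s := a jc + a js - t with hsdef
      have hjcs : jc < js := j.castSucc_lt_succ
      have hjcsne : jc ≠ js := ne_of_lt hjcs
      have hden : 0 < a jc - a js := by dsimp [jc, js]; linarith
      set c2 := (t - a js) / (a jc - a js) with hc2def
      have hc20 : 0 ≤ c2 := div_nonneg (by dsimp [js]; linarith) hden.le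
      have hc21 : c2 ≤ 1 := by
        rw [div_le_one hden]; dsimp [jc]; linarith
      set c := Real.sqrt c2 with hcdef
      set d := Real.sqrt (1 - c2) with hddef
      have hc : c^2 = c2 := Real.sq_sqrt hc20
      have hd : d^2 = 1 - c2 := Real.sq_sqrt (by linarith)
      have key1 : c^2 + d^2 = 1 := by rw [hc, hd]; ring
      have key2 : c^2 * a jc + d^2 * a js = t := by
        rw [hc, hd, hc2def]
        field_simp
        ring
      have key3 : d^2 * a jc + c^2 * a js = s := by
        have : (c^2 + d^2) * (a jc + a js) = a jc + a js := by rw [key1]; ring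
        nlinarith [key2, key1]
      -- a' and p'
      set a' : Fin n → ℝ := fun m => if m = j then s else a (jc.succAbove m) with ha'def
      set p' : Fin n → ℝ := fun m => p m.succ with hp'def
      have hsaj : jc.succAbove j = js := Fin.succAbove_castSucc_self j
      have ha'lt : ∀ m : Fin n, m < j → a' m = a m.castSucc := by
        intro m hm
        rw [ha'def]
        simp only [ne_of_lt hm, if_false]
        rw [Fin.succAbove_of_castSucc_lt _ _ (by exact Fin.castSucc_lt_castSucc_iff.mpr hm)]
      have ha'gt : ∀ m : Fin n, j < m → a' m = a m.succ := by
        intro m hm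
        rw [ha'def]
        simp only [ne_of_gt hm, if_false]
        rw [Fin.succAbove_of_le_castSucc _ _ (Fin.castSucc_le_castSucc_iff.mpr hm.le)]
      have ha'j : a' j = s := by rw [ha'def]; simp
      have hsajc : s ≤ a jc := by dsimp [js] at hjs ⊢; linarith
      have hsjs : a js ≤ s := by dsimp [jc] at hjc ⊢; linarith
      -- antitone a'
      have ha' : Antitone a' := by
        intro m m' hmm
        rcases lt_trichotomy m' j with h1 | h1 | h1
        · have hm : m < j := lt_of_le_of_lt hmm h1
          rw [ha'lt _ hm, ha'lt _ h1]
          exact ha (Fin.castSucc_le_castSucc_iff.mpr hmm)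
        · subst h1
          rw [ha'j]
          rcases eq_or_lt_of_le hmm with h2 | h2
          · rw [h2, ha'j]
          · rw [ha'lt _ h2]
            exact le_trans hsajc (ha (Fin.castSucc_le_castSucc_iff.mpr h2.le))
        · rw [ha'gt _ h1]
          have h3 : a m'.succ ≤ a js := ha (Fin.succ_le_succ_iff.mpr h1.le)
          rcases lt_trichotomy m j with h2 | h2 | h2
          · rw [ha'lt _ h2]
            refine le_trans h3 (le_trans hsjs (le_trans hsajc ?_))
            exact ha (Fin.castSucc_le_castSucc_iff.mpr h2.le)
          · rw [h2, ha'j]; exact le_trans h3 hsjs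
          · rw [ha'gt _ h2]
            exact ha (Fin.succ_le_succ_iff.mpr hmm)
      have hp' : Antitone p' := fun m m' h => hp (Fin.succ_le_succ_iff.mpr h)
      -- sum of a'
      have hsuma' : ∑ m, a' m = (∑ i, a i) - t := by
        have h1 : ∑ i : Fin (n+1), a i = a jc + ∑ m : Fin n, a (jc.succAbove m) :=
          Fin.sum_univ_succAbove a jc
        have h2 : ∑ m, a' m = ∑ m : Fin n, a (jc.succAbove m) + (s - a js) := by
          rw [← Finset.sum_add_sum_compl {j} a',
            ← Finset.sum_add_sum_compl (ι := Fin n) {j} (fun m => a (jc.succAbove m))]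
          have hcongr : ∑ i ∈ ({j}ᶜ : Finset (Fin n)), a' i
              = ∑ i ∈ ({j}ᶜ : Finset (Fin n)), a (jc.succAbove i) := by
            apply Finset.sum_congr rfl
            intro m hm
            simp only [Finset.mem_compl, Finset.mem_singleton] at hm
            simp [ha'def, hm]
          rw [Finset.sum_singleton, Finset.sum_singleton, ha'j, hsaj, hcongr]
          ring
        rw [h2, h1, hsdef]; ring
      have hsump' : ∑ m, p' m = (∑ i, p i) - t := by
        have := Fin.sum_univ_succ p
        rw [hp'def, htdef]; simp only [this]; ring
      -- prefix sums of a'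
      have hpsa' : ∀ k : ℕ, (j : ℕ) < k → psum a' k = psum a (k+1) - t := by
        intro k hk
        have e1 : psum a (k+1)
            = (if (jc : ℕ) < k+1 then a jc else 0)
              + ∑ m : Fin n, (if ((jc.succAbove m : Fin (n+1)) : ℕ) < k+1
                  then a (jc.succAbove m) else 0) := by
          rw [psum_eq_sum_ite]
          exact Fin.sum_univ_succAbove _ jc
        have hjck : ((jc : Fin (n+1)) : ℕ) < k + 1 := by
          simp only [hjcdef, Fin.coe_castSucc]
          omega
        have e2 : ∀ m : Fin n, m ≠ j →
            (if ((jc.succAbove m : Fin (n+1)) : ℕ) < k+1 then a (jc.succAbove m) else 0)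
              = (if (m : ℕ) < k then a' m else 0) := by
          intro m hm
          rcases lt_or_gt_of_ne hm with h | h
          · have hv : jc.succAbove m = m.castSucc :=
              Fin.succAbove_of_castSucc_lt _ _ (Fin.castSucc_lt_castSucc_iff.mpr h)
            have hmk : (m : ℕ) < k := lt_trans (Fin.lt_iff_val_lt_val.mp h) hk
            rw [hv, ha'lt _ h]
            simp only [Fin.coe_castSucc]
            rw [if_pos (by omega), if_pos hmk]
          · have hv : jc.succAbove m = m.succ :=
              Fin.succAbove_of_le_castSucc _ _ (Fin.castSucc_le_castSucc_iff.mpr h.le)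
            rw [hv, ha'gt _ h]
            simp only [Fin.val_succ]
            by_cases hmk : (m : ℕ) < k
            · rw [if_pos (by omega), if_pos hmk]
            · rw [if_neg (by omega), if_neg hmk]
        have e3 : psum a' k = (if (j : ℕ) < k then a' j else 0)
            + ∑ m ∈ Finset.univ.erase j, (if (m : ℕ) < k then a' m else 0) := by
          rw [psum_eq_sum_ite]
          exact (Finset.add_sum_erase _ _ (Finset.mem_univ j)).symm
        have e4 : ∑ m : Fin n, (if ((jc.succAbove m : Fin (n+1)) : ℕ) < k+1
              then a (jc.succAbove m) else 0)
            = (if ((jc.succAbove j : Fin (n+1)) : ℕ) < k+1 then a (jc.succAbove j) else 0)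
              + ∑ m ∈ Finset.univ.erase j, (if (m : ℕ) < k then a' m else 0) := by
          rw [← Finset.add_sum_erase _ _ (Finset.mem_univ j)]
          congr 1
          apply Finset.sum_congr rfl
          intro m hm
          exact e2 m (Finset.ne_of_mem_erase hm)
        have hjsk : ((jc.succAbove j : Fin (n+1)) : ℕ) < k + 1 := by
          rw [hsaj]
          simp only [hjsdef, Fin.val_succ]
          omega
        rw [e1, e4, e3, if_pos hjck, if_pos hjsk, if_pos hk, hsaj, ha'j, hsdef]
        ring
      -- prefix inequalities
      have hpre' : ∀ k : ℕ, psum p' k ≤ psum a' k := by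
        intro k
        rcases le_or_gt k (j : ℕ) with hk | hk
        · rw [psum, psum]
          apply Finset.sum_le_sum
          intro i hi
          simp only [Finset.mem_filter] at hi
          have hij : i < j := by
            rw [Fin.lt_iff_val_lt_val]
            omega
          rw [ha'lt _ hij]
          have h1 : p' i ≤ t := by
            rw [hp'def, htdef]
            exact hp (Fin.zero_le _)
          have h2 : a jc ≤ a i.castSucc := ha (Fin.castSucc_le_castSucc_iff.mpr hij.le)
          linarith
        · rw [show psum p' k = psum p (k+1) - p 0 from psum_succ_comp p k, hpsa' k hk]
          have := hpre (k+1)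
          rw [htdef]
          linarith
      have hsum' : ∑ m, p' m = ∑ m, a' m := by
        rw [hsump', hsuma', hsum]
      obtain ⟨Q, hQ1, hQ2⟩ := IH a' p' ha' hp' hpre' hsum'
      -- construct U
      set P : Fin (n+1) → (Fin (n+1) → ℝ) := fun k => Pi.single k 1 with hPdef
      set row0 : Fin (n+1) → ℝ := c • P jc + d • P js with hrow0def
      set rowF : Fin n → (Fin (n+1) → ℝ) :=
        fun m => if m = j then (-d) • P jc + c • P js else P (jc.succAbove m) with hrowFdef
      have hPP : ∀ k l, P k ⬝ᵥ P l = if k = l then (1:ℝ) else 0 := by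
        intro k l
        rw [hPdef]
        simp only [single_dotProduct, one_mul, Pi.single_apply]
      have hsane : ∀ m : Fin n, jc.succAbove m ≠ jc := fun m => Fin.succAbove_ne jc m
      have hsajs : ∀ m : Fin n, jc.succAbove m = js ↔ m = j := by
        intro m
        rw [← hsaj]
        exact Fin.succAbove_right_inj
      have hne1 : ∀ m : Fin n, jc ≠ jc.succAbove m := fun m => Ne.symm (hsane m)
      have hne2 : ∀ m : Fin n, m ≠ j → js ≠ jc.succAbove m :=
        fun m hm h => hm ((hsajs m).mp h.symm)
      have hrowFj : rowF j = (-d) • P jc + c • P js := by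
        rw [hrowFdef]
        simp
      have hrowFne : ∀ m : Fin n, m ≠ j → rowF m = P (jc.succAbove m) := by
        intro m hm
        rw [hrowFdef]
        simp [hm]
      have hr00 : row0 ⬝ᵥ row0 = 1 := by
        rw [hrow0def]
        simp only [add_dotProduct, dotProduct_add, smul_dotProduct, dotProduct_smul,
          smul_eq_mul, hPP]
        simp [hjcsne, Ne.symm hjcsne]
        linear_combination key1
      have hr0F : ∀ m, row0 ⬝ᵥ rowF m = 0 := by
        intro m
        by_cases hm : m = j
        · subst hm
          rw [hrow0def, hrowFj]
          simp only [add_dotProduct, dotProduct_add, smul_dotProduct, dotProduct_smul,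
            smul_eq_mul, hPP]
          simp [hjcsne, Ne.symm hjcsne]
          ring
        · rw [hrow0def, hrowFne m hm]
          simp only [add_dotProduct, smul_dotProduct, smul_eq_mul, hPP]
          simp [hne1 m, hne2 m hm]
      have hFF : ∀ m m', rowF m ⬝ᵥ rowF m' = if m = m' then (1:ℝ) else 0 := by
        intro m m'
        by_cases hm : m = j <;> by_cases hm' : m' = j
        · subst hm; subst hm'
          rw [hrowFj, if_pos rfl]
          simp only [add_dotProduct, dotProduct_add, smul_dotProduct, dotProduct_smul,
            smul_eq_mul, hPP]
          simp [hjcsne, Ne.symm hjcsne]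
          linear_combination key1
        · subst hm
          rw [hrowFj, hrowFne m' hm', if_neg (fun h => hm' h.symm)]
          simp only [add_dotProduct, smul_dotProduct, smul_eq_mul, hPP]
          simp [hne1 m', hne2 m' hm']
        · subst hm'
          rw [hrowFj, hrowFne m hm, if_neg hm]
          simp only [dotProduct_add, dotProduct_smul, smul_eq_mul, hPP]
          have hx : ¬ (jc.succAbove m = js) := fun h => hm ((hsajs m).mp h)
          simp [hsane m, hx]
        · rw [hrowFne m hm, hrowFne m' hm', hPP]
          simp [Fin.succAbove_right_inj]
      -- the quadratic form via pointwise product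
      have haP : ∀ l : Fin (n+1), a * P l = Pi.single l (a l) := by
        intro l
        funext k
        rw [hPdef]
        by_cases h : k = l <;> simp [Pi.single_apply, h]
      have hPs : ∀ (v : Fin (n+1) → ℝ) (l : Fin (n+1)) (x : ℝ),
          v ⬝ᵥ Pi.single l x = v l * x := by
        intro v l x
        simp
      have hPapp : ∀ k l : Fin (n+1), P k l = if l = k then (1:ℝ) else 0 := by
        intro k l
        rw [hPdef]
        simp [Pi.single_apply]
      have hrow0app : ∀ k, row0 k = (if k = jc then c else 0) + (if k = js then d else 0) := by
        intro k
        rw [hrow0def]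
        simp only [Pi.add_apply, Pi.smul_apply, smul_eq_mul, hPapp]
        by_cases h1 : k = jc <;> by_cases h2 : k = js <;> simp [h1, h2]
      have hrowFjapp : ∀ k, rowF j k
          = (if k = jc then -d else 0) + (if k = js then c else 0) := by
        intro k
        rw [hrowFj]
        simp only [Pi.add_apply, Pi.smul_apply, smul_eq_mul, hPapp]
        by_cases h1 : k = jc <;> by_cases h2 : k = js <;> simp [h1, h2]
      have hB00 : row0 ⬝ᵥ (a * row0) = t := by
        have h1 : a * row0 = c • (Pi.single jc (a jc) : Fin (n+1) → ℝ) + d • (Pi.single js (a js) : Fin (n+1) → ℝ) := by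
          rw [hrow0def, mul_add, mul_smul_comm, mul_smul_comm, haP, haP]
        rw [h1, dotProduct_add, dotProduct_smul, dotProduct_smul, hPs, hPs,
          hrow0app jc, hrow0app js]
        simp [hjcsne, Ne.symm hjcsne]
        linear_combination key2
      have hBF : ∀ m m', rowF m ⬝ᵥ (a * rowF m') = if m = m' then a' m else 0 := by
        intro m m'
        by_cases hm' : m' = j
        · have h1 : a * rowF m' = (-d) • (Pi.single jc (a jc) : Fin (n+1) → ℝ) + c • (Pi.single js (a js) : Fin (n+1) → ℝ) := by
            rw [hm', hrowFj, mul_add, mul_smul_comm, mul_smul_comm, haP, haP]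
          rw [h1, dotProduct_add, dotProduct_smul, dotProduct_smul, hPs, hPs]
          by_cases hm : m = j
          · rw [hm, hm', if_pos rfl, hrowFjapp jc, hrowFjapp js, ha'j]
            simp [hjcsne, Ne.symm hjcsne]
            linear_combination key3
          · rw [if_neg (fun h => hm (h.trans hm')), hrowFne m hm, hPapp, hPapp]
            have hx1 : ¬ (jc = jc.succAbove m) := hne1 m
            have hx2 : ¬ (js = jc.succAbove m) := hne2 m hm
            simp [hx1, hx2]
        · have h1 : a * rowF m' = (Pi.single (jc.succAbove m') (a (jc.succAbove m')) : Fin (n+1) → ℝ) := by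
            rw [hrowFne m' hm', haP]
          rw [h1, hPs]
          by_cases hm : m = j
          · rw [if_neg (fun h => hm' (h.symm.trans hm)), hm, hrowFjapp]
            have hx1 : ¬ (jc.succAbove m' = jc) := hsane m'
            have hx2 : ¬ (jc.succAbove m' = js) := fun h => hm' ((hsajs m').mp h)
            simp [hx1, hx2]
          · rw [hrowFne m hm, hPapp]
            by_cases hmm : m = m'
            · rw [if_pos hmm, hmm, if_pos rfl, one_mul, ha'def]
              simp [hm']
            · have hx : ¬ (jc.succAbove m' = jc.succAbove m) :=
                fun h => hmm (Fin.succAbove_right_inj.mp h.symm)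
              rw [if_neg hx, if_neg hmm, zero_mul]
      -- assemble U
      set U : Matrix (Fin (n+1)) (Fin (n+1)) ℝ :=
        fun i => Fin.cases row0 (fun i' => ∑ m, Q i' m • rowF m) i with hUdef
      have hU0 : U 0 = row0 := by
        rw [hUdef]
        exact Fin.cases_zero
      have hUsucc : ∀ i' : Fin n, U i'.succ = ∑ m, Q i' m • rowF m := by
        intro i'
        rw [hUdef]
        exact Fin.cases_succ i'
      refine ⟨U, ?_, ?_⟩
      · intro i i''
        induction i using Fin.cases with
        | zero =>
          induction i'' using Fin.cases with
          | zero => rw [hU0, hr00, if_pos rfl]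
          | succ i'' =>
            rw [hU0, hUsucc, dotProduct_sum', if_neg (Fin.succ_ne_zero i'').symm]
            rw [Finset.sum_eq_zero]
            intro m _
            rw [dotProduct_smul, hr0F m, smul_zero]
        | succ i =>
          induction i'' using Fin.cases with
          | zero =>
            rw [hU0, hUsucc, sum_dotProduct', if_neg (Fin.succ_ne_zero i)]
            rw [Finset.sum_eq_zero]
            intro m _
            rw [smul_dotProduct, dotProduct_comm, hr0F m, smul_zero]
          | succ i'' =>
            rw [hUsucc, hUsucc, sum_dotProduct']
            have hinner : ∀ m ∈ Finset.univ, (Q i m • rowF m) ⬝ᵥ (∑ m', Q i'' m' • rowF m')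
                = Q i m * Q i'' m := by
              intro m _
              rw [smul_dotProduct, dotProduct_sum']
              have : ∀ m' ∈ Finset.univ, (rowF m) ⬝ᵥ (Q i'' m' • rowF m')
                  = if m = m' then Q i'' m' else 0 := by
                intro m' _
                rw [dotProduct_smul, hFF m m', smul_eq_mul]
                by_cases h : m = m' <;> simp [h]
              rw [Finset.sum_congr rfl this, Finset.sum_ite_eq Finset.univ m (fun m' => Q i'' m')]
              simp
            rw [Finset.sum_congr rfl hinner]
            have := hQ1 i i''
            rw [dotProduct] at this
            rw [this]
            by_cases h : i = i''
            · rw [if_pos h, if_pos (by rw [h])]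
            · rw [if_neg h, if_neg (fun hh => h (Fin.succ_inj.mp hh))]
      · intro i
        have hquad : ∀ v : Fin (n+1) → ℝ, (∑ k, (v k)^2 * a k) = v ⬝ᵥ (a * v) := by
          intro v
          rw [dotProduct]
          apply Finset.sum_congr rfl
          intro k _
          simp only [Pi.mul_apply]
          ring
        rw [hquad]
        induction i using Fin.cases with
        | zero => rw [hU0, hB00, htdef]
        | succ i =>
          rw [hUsucc]
          have hmulsum : a * (∑ m, Q i m • rowF m) = ∑ m, Q i m • (a * rowF m) := by
            rw [Finset.mul_sum]
            apply Finset.sum_congr rfl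
            intro m _
            rw [mul_smul_comm]
          rw [hmulsum, sum_dotProduct']
          have hinner : ∀ m ∈ Finset.univ, (Q i m • rowF m) ⬝ᵥ (∑ m', Q i m' • (a * rowF m'))
              = (Q i m)^2 * a' m := by
            intro m _
            rw [smul_dotProduct, dotProduct_sum']
            have : ∀ m' ∈ Finset.univ, (rowF m) ⬝ᵥ (Q i m' • (a * rowF m'))
                = if m = m' then Q i m' * a' m else 0 := by
              intro m' _
              rw [dotProduct_smul, hBF m m', smul_eq_mul]
              by_cases h : m = m' <;> simp [h]
            rw [Finset.sum_congr rfl this,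
              Finset.sum_ite_eq Finset.univ m (fun m' => Q i m' * a' m)]
            simp only [Finset.mem_univ, if_pos, smul_eq_mul]
            ring
          rw [Finset.sum_congr rfl hinner, hQ2 i, hp'def]

noncomputable def descPerm {n : ℕ} (x : Fin n → ℝ) : Equiv.Perm (Fin n) :=
  (Fin.revPerm).trans (Tuple.sort x)

lemma sortDesc_eq_comp {n : ℕ} (x : Fin n → ℝ) : sortDesc x = x ∘ (descPerm x) := rfl

lemma antitone_sortDesc {n : ℕ} (x : Fin n → ℝ) : Antitone (sortDesc x) := by
  intro i j hij
  exact Tuple.monotone_sort x (Fin.rev_le_rev.mpr hij)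

lemma sum_sortDesc {n : ℕ} (x : Fin n → ℝ) : ∑ i, sortDesc x i = ∑ i, x i := by
  rw [sortDesc_eq_comp]
  exact Equiv.sum_comp (descPerm x) x


lemma horn {n : ℕ} (a p : Fin n → ℝ)
    (hmaj : ∀ k : ℕ, topSum p k ≤ topSum a k) (hsum : ∑ i, p i = ∑ i, a i) :
    ∃ U : Matrix (Fin n) (Fin n) ℝ,
      (∀ i i', U i ⬝ᵥ U i' = if i = i' then (1:ℝ) else 0) ∧
      (∀ i, ∑ k, (U i k)^2 * a k = p i) := by
  obtain ⟨U, hU1, hU2⟩ := hornSorted n (sortDesc a) (sortDesc p)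
    (antitone_sortDesc a) (antitone_sortDesc p) (fun k => hmaj k)
    (by rw [sum_sortDesc, sum_sortDesc, hsum])
  set σp := (descPerm p)⁻¹ with hσp
  set σa := (descPerm a)⁻¹ with hσa
  refine ⟨fun i j => U (σp i) (σa j), ?_, ?_⟩
  · intro i i''
    have hre : ∀ f : Fin n → ℝ, ∑ j, f (σa j) = ∑ j, f j := fun f => Equiv.sum_comp σa f
    calc (fun j => U (σp i) (σa j)) ⬝ᵥ (fun j => U (σp i'') (σa j))
        = ∑ j, U (σp i) (σa j) * U (σp i'') (σa j) := rfl
      _ = ∑ j, U (σp i) j * U (σp i'') j := hre (fun j => U (σp i) j * U (σp i'') j)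
      _ = if σp i = σp i'' then 1 else 0 := hU1 _ _
      _ = if i = i'' then 1 else 0 := by
          by_cases h : i = i''
          · rw [if_pos h, if_pos (by rw [h])]
          · rw [if_neg h, if_neg (fun hh => h (σp.injective hh))]
  · intro i
    have step : ∑ j, (U (σp i) (σa j))^2 * a j
        = ∑ j, (U (σp i) (σa (descPerm a j)))^2 * a (descPerm a j) :=
      (Equiv.sum_comp (descPerm a) (fun j => (U (σp i) (σa j))^2 * a j)).symm
    have e1 : ∀ j, σa (descPerm a j) = j := fun j => (descPerm a).symm_apply_apply j
    have e2 : ∀ j : Fin n, a (descPerm a j) = sortDesc a j := fun j => rfl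
    calc ∑ j, (U (σp i) (σa j))^2 * a j
        = ∑ j, (U (σp i) j)^2 * sortDesc a j := by
          rw [step]; exact Finset.sum_congr rfl (fun j _ => by rw [e1, e2])
      _ = sortDesc p (σp i) := hU2 _
      _ = p (descPerm p (σp i)) := rfl
      _ = p i := by rw [hσp]; exact congrArg p ((descPerm p).apply_symm_apply i)

end SchurHornAux

/-- If a probability vector `p` is majorized by the eigenvalue vector of a
density matrix `ρ`, then there is a von Neumann measurement whose outcome distribution
on `ρ` is `p`. -/
theorem stmt1 {n : ℕ} (ρ : Matrix (Fin n) (Fin n) ℂ)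
    (hρ : ρ.PosSemidef) (htr : ρ.trace = 1)
    (p : Fin n → ℝ) (hp : IsProbVec p)
    (hmaj : Maj p hρ.isHermitian.eigenvalues) :
    ∃ ψ : Fin n → (Fin n → ℂ), IsONB ψ ∧
      ∀ i, star (ψ i) ⬝ᵥ (ρ *ᵥ ψ i) = (p i : ℂ) := by
  classical
  set H := hρ.isHermitian with hH
  set lam := H.eigenvalues with hlam
  set V : Matrix (Fin n) (Fin n) ℂ := (H.eigenvectorUnitary : Matrix (Fin n) (Fin n) ℂ)
    with hV
  have hVsV : Vᴴ * V = 1 := by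
    simpa [hV, star_eq_conjTranspose] using
      (Matrix.mem_unitaryGroup_iff').mp (H.eigenvectorUnitary).2
  have hspec : ρ = V * diagonal (RCLike.ofReal ∘ lam) * Vᴴ := by
    simpa [hV, star_eq_conjTranspose] using H.spectral_theorem
  -- sum of eigenvalues is 1
  have hsumlam : ∑ i, lam i = 1 := by
    have h1 : ρ.trace = (diagonal (RCLike.ofReal ∘ lam) : Matrix (Fin n) (Fin n) ℂ).trace := by
      rw [hspec, Matrix.trace_mul_cycle, hVsV, Matrix.one_mul]
    rw [htr, Matrix.trace_diagonal] at h1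
    have : ((∑ i, lam i : ℝ) : ℂ) = 1 := by
      rw [Complex.ofReal_sum]
      exact h1.symm
    exact_mod_cast this
  obtain ⟨U, hU1, hU2⟩ := horn lam p (fun k => hmaj k) (by rw [hp.2, hsumlam])
  set u : Fin n → (Fin n → ℂ) := fun i j => ((U i j : ℝ) : ℂ) with hu
  refine ⟨fun i => V *ᵥ u i, ?_, ?_⟩
  · intro i i'
    have hl : star (V *ᵥ u i) ⬝ᵥ (V *ᵥ u i') = star (u i) ⬝ᵥ u i' := by
      rw [Matrix.star_mulVec, Matrix.dotProduct_mulVec, Matrix.vecMul_vecMul,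
        hVsV, Matrix.vecMul_one]
    rw [hl]
    have : star (u i) ⬝ᵥ u i' = ((U i ⬝ᵥ U i' : ℝ) : ℂ) := by
      rw [dotProduct, dotProduct, Complex.ofReal_sum]
      apply Finset.sum_congr rfl
      intro k _
      simp [hu, Complex.conj_ofReal]
    rw [this, hU1 i i']
    by_cases h : i = i' <;> simp [h]
  · intro i
    have hρψ : ρ *ᵥ (V *ᵥ u i) = V *ᵥ ((diagonal (RCLike.ofReal ∘ lam)) *ᵥ u i) := by
      rw [hspec, Matrix.mulVec_mulVec,
        Matrix.mul_assoc (V * diagonal (RCLike.ofReal ∘ lam)) Vᴴ V, hVsV,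
        Matrix.mul_one, ← Matrix.mulVec_mulVec]
    rw [hρψ]
    have hl : star (V *ᵥ u i) ⬝ᵥ (V *ᵥ ((diagonal (RCLike.ofReal ∘ lam)) *ᵥ u i))
        = star (u i) ⬝ᵥ ((diagonal (RCLike.ofReal ∘ lam)) *ᵥ u i) := by
      rw [Matrix.star_mulVec, Matrix.dotProduct_mulVec, Matrix.vecMul_vecMul,
        hVsV, Matrix.vecMul_one]
    rw [hl]
    have : star (u i) ⬝ᵥ ((diagonal (RCLike.ofReal ∘ lam)) *ᵥ u i)
        = ((∑ k, (U i k)^2 * lam k : ℝ) : ℂ) := by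
      rw [dotProduct, Complex.ofReal_sum]
      apply Finset.sum_congr rfl
      intro k _
      rw [Matrix.mulVec_diagonal]
      simp [hu, Complex.conj_ofReal]
      ring
    rw [this, hU2 i]
end

section
/- For any two probability vectors a, b ∈ ℝⁿ there exists a unique probability vector a∨b (the majorization join) such that a ≺ a∨b, b ≺ a∨b, and a∨b ≺ c̃ for every probability vector c̃ satisfying a ≺ c̃ and b ≺ c̃. Together with the majorization meet, this makes the set of n-dimensional probability vectors (identified up to permutation of entries) a lattice under majorization. -/
open Matrix Finset ComplexOrder

namespace MajAux

variable {n : ℕ}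

lemma sortDesc_antitone (x : Fin n → ℝ) : Antitone (sortDesc x) := by
  intro i j hij
  exact Tuple.monotone_sort x (Fin.rev_le_rev.mpr hij)

lemma sortDesc_nonneg {x : Fin n → ℝ} (hx : ∀ i, 0 ≤ x i) (i : Fin n) :
    0 ≤ sortDesc x i := hx _

lemma sum_sortDesc (x : Fin n → ℝ) : ∑ i, sortDesc x i = ∑ i, x i := by
  calc ∑ i, sortDesc x i
      = ∑ i, (fun j : Fin n => x (Tuple.sort x j)) (Fin.revPerm i) := rfl
    _ = ∑ i, x (Tuple.sort x i) := Equiv.sum_comp Fin.revPerm (fun j => x (Tuple.sort x j))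
    _ = ∑ i, x i := Equiv.sum_comp (Tuple.sort x) x

lemma topSum_zero (x : Fin n → ℝ) : topSum x 0 = 0 := by
  unfold topSum; simp

lemma topSum_succ {x : Fin n → ℝ} {k : ℕ} (hk : k < n) :
    topSum x (k + 1) = topSum x k + sortDesc x ⟨k, hk⟩ := by
  unfold topSum
  have h : Finset.univ.filter (fun i : Fin n => (i : ℕ) < k + 1)
      = insert ⟨k, hk⟩ (Finset.univ.filter (fun i : Fin n => (i : ℕ) < k)) := by
    ext i
    simp [Nat.lt_succ_iff_lt_or_eq, Fin.ext_iff, or_comm]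
    exact Nat.le_iff_lt_or_eq.trans Or.comm
  rw [h, Finset.sum_insert (by simp)]
  ring

lemma topSum_of_le (x : Fin n → ℝ) {k : ℕ} (hk : n ≤ k) :
    topSum x k = ∑ i, sortDesc x i := by
  unfold topSum
  congr 1
  ext i
  simp [lt_of_lt_of_le i.isLt hk]

lemma topSum_nonneg {x : Fin n → ℝ} (hx : ∀ i, 0 ≤ x i) (k : ℕ) :
    0 ≤ topSum x k :=
  Finset.sum_nonneg fun i _ => sortDesc_nonneg hx i

lemma topSum_mono {x : Fin n → ℝ} (hx : ∀ i, 0 ≤ x i) : Monotone (topSum x) := by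
  apply monotone_nat_of_le_succ
  intro k
  by_cases hk : k < n
  · rw [topSum_succ hk]
    have := sortDesc_nonneg hx ⟨k, hk⟩
    linarith
  · have h1 : n ≤ k := Nat.le_of_not_lt hk
    rw [topSum_of_le x h1, topSum_of_le x (h1.trans (Nat.le_succ k))]

lemma topSum_concave {x : Fin n → ℝ} (hx : ∀ i, 0 ≤ x i) (k : ℕ) :
    topSum x (k + 2) + topSum x k ≤ 2 * topSum x (k + 1) := by
  by_cases hk : k + 1 < n
  · have hk0 : k < n := by omega
    rw [show k + 2 = (k + 1) + 1 from rfl, topSum_succ hk, topSum_succ hk0]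
    have h := sortDesc_antitone x (show (⟨k, hk0⟩ : Fin n) ≤ ⟨k + 1, hk⟩ from
      Fin.mk_le_mk.mpr (Nat.le_succ k))
    linarith
  · have h1 : n ≤ k + 1 := Nat.le_of_not_lt hk
    have hmono := topSum_mono hx (Nat.le_succ k)
    rw [topSum_of_le x (h1.trans (Nat.le_succ _))]
    rw [topSum_of_le x h1] at hmono ⊢
    linarith

lemma topSum_eq_one {x : Fin n → ℝ} (hx : IsProbVec x) {k : ℕ} (hk : n ≤ k) :
    topSum x k = 1 := by
  rw [topSum_of_le x hk, sum_sortDesc, hx.2]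

lemma topSum_le_one {x : Fin n → ℝ} (hx : IsProbVec x) (k : ℕ) :
    topSum x k ≤ 1 := by
  rcases le_or_gt n k with h | h
  · rw [topSum_eq_one hx h]
  · calc topSum x k ≤ topSum x n := topSum_mono hx.1 h.le
      _ = 1 := topSum_eq_one hx le_rfl

lemma sortDesc_eq_self {x : Fin n → ℝ} (hx : Antitone x) : sortDesc x = x := by
  have h : x ∘ (Fin.revPerm : Equiv.Perm (Fin n)) = x ∘ Tuple.sort x := by
    rw [Tuple.comp_sort_eq_comp_iff_monotone]
    intro i j hij
    exact hx (Fin.rev_le_rev.mpr hij)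
  funext i
  have h2 := congrFun h i.rev
  simp only [Function.comp_apply, Fin.revPerm_apply, Fin.rev_rev] at h2
  exact h2.symm

lemma sortDesc_eq_of_topSum {x y : Fin n → ℝ} (h : ∀ k, topSum x k = topSum y k) :
    sortDesc x = sortDesc y := by
  funext i
  have h1 := topSum_succ (x := x) i.isLt
  have h2 := topSum_succ (x := y) i.isLt
  rw [Fin.eta] at h1 h2
  have h3 := h ((i : ℕ) + 1)
  have h4 := h (i : ℕ)
  linarith

lemma build (g : ℕ → ℝ) (h0 : g 0 = 0) (h1 : ∀ k, n ≤ k → g k = 1)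
    (hmono : Monotone g) (hconc : ∀ k, g (k + 2) + g k ≤ 2 * g (k + 1)) :
    IsProbVec (fun i : Fin n => g (i + 1) - g i) ∧
      ∀ k, topSum (fun i : Fin n => g (i + 1) - g i) k = g k := by
  set c : Fin n → ℝ := fun i => g (i + 1) - g i with hc
  have hD : Antitone (fun k : ℕ => g (k + 1) - g k) := by
    apply antitone_nat_of_succ_le
    intro k
    have := hconc k
    show g (k + 1 + 1) - g (k + 1) ≤ g (k + 1) - g k
    linarith
  have hcanti : Antitone c := fun i j hij => hD (show (i : ℕ) ≤ j from hij)
  have hnonneg : ∀ i, 0 ≤ c i := by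
    intro i
    have := hmono (Nat.le_succ (i : ℕ))
    simp only [hc]
    linarith
  have hsum : ∑ i, c i = 1 := by
    rw [hc, Fin.sum_univ_eq_sum_range (fun i => g (i + 1) - g i) n,
      Finset.sum_range_sub g n, h0, h1 n le_rfl]
    ring
  have hsort : sortDesc c = c := sortDesc_eq_self hcanti
  have htop : ∀ k, topSum c k = g (min k n) := by
    intro k
    induction k with
    | zero => rw [topSum_zero, Nat.zero_min, h0]
    | succ k ih =>
      by_cases hk : k < n
      · rw [topSum_succ hk, ih, hsort, min_eq_left hk.le, min_eq_left hk]
        simp only [hc]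
        ring
      · have hn : n ≤ k := Nat.le_of_not_lt hk
        rw [topSum_of_le c (hn.trans (Nat.le_succ k)), hsort, hsum,
          min_eq_right (hn.trans (Nat.le_succ k)), h1 n le_rfl]
  refine ⟨⟨hnonneg, hsum⟩, fun k => ?_⟩
  rcases le_or_gt k n with h | h
  · rw [htop k, min_eq_left h]
  · rw [htop k, min_eq_right h.le, h1 n le_rfl, h1 k h.le]

end MajAux

/-- Any two probability vectors have a majorization join, unique up to
permutation of the entries, and likewise a majorization meet; hence probability
vectors (up to permutation) form a lattice under majorization. -/
theorem stmt3 {n : ℕ} (a b : Fin n → ℝ) (ha : IsProbVec a) (hb : IsProbVec b) :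
    (∃ c, IsMajJoin a b c ∧ ∀ c', IsMajJoin a b c' → sortDesc c' = sortDesc c) ∧
    (∃ m, IsMajMeet {a, b} m ∧ ∀ m', IsMajMeet {a, b} m' → sortDesc m' = sortDesc m) := by
  classical
  have hn0 : 0 < n := by
    by_contra h
    have hn : n = 0 := by omega
    subst hn
    have := ha.2
    simp at this
  -- the "delta" distribution, which majorizes everything
  set g1 : ℕ → ℝ := fun k => if k = 0 then 0 else 1 with hg1
  have hg1mono : Monotone g1 := by
    intro i j hij
    by_cases hi : i = 0
    · subst hi
      simp only [hg1, if_pos rfl]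
      split <;> norm_num
    · have hj : j ≠ 0 := by omega
      simp [hg1, hi, hj]
  have hg1conc : ∀ k, g1 (k + 2) + g1 k ≤ 2 * g1 (k + 1) := by
    intro k
    simp only [hg1, Nat.succ_ne_zero, if_false]
    split <;> norm_num
  have hbuild1 := MajAux.build (n := n) g1 (by simp [hg1])
    (fun k hk => by
      have : k ≠ 0 := by omega
      simp [hg1, this]) hg1mono hg1conc
  set delta : Fin n → ℝ := fun i : Fin n => g1 (↑i + 1) - g1 ↑i with hdelta
  have hmajdelta : ∀ x : Fin n → ℝ, IsProbVec x → Maj x delta := by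
    intro x hx k
    rw [hbuild1.2 k]
    by_cases hk : k = 0
    · subst hk
      rw [MajAux.topSum_zero]
      simp [hg1]
    · simp only [hg1, hk, if_false]
      exact MajAux.topSum_le_one hx k
  constructor
  · -- join
    set S : Set (Fin n → ℝ) := {c' | IsProbVec c' ∧ Maj a c' ∧ Maj b c'} with hS
    have hdS : delta ∈ S := ⟨hbuild1.1, hmajdelta a ha, hmajdelta b hb⟩
    set G : ℕ → ℝ := fun k => sInf ((fun c' => topSum c' k) '' S) with hG
    have hne : ∀ k, ((fun c' => topSum c' k) '' S).Nonempty :=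
      fun k => ⟨_, ⟨delta, hdS, rfl⟩⟩
    have hbdd : ∀ k, BddBelow ((fun c' => topSum c' k) '' S) := by
      intro k
      refine ⟨0, fun y hy => ?_⟩
      obtain ⟨c', hc', rfl⟩ := hy
      exact MajAux.topSum_nonneg hc'.1.1 k
    have hGle : ∀ c' ∈ S, ∀ k, G k ≤ topSum c' k := by
      intro c' hc' k
      exact csInf_le (hbdd k) ⟨c', hc', rfl⟩
    have hGgea : ∀ k, topSum a k ≤ G k := by
      intro k
      refine le_csInf (hne k) ?_
      rintro y ⟨c', hc', rfl⟩
      exact hc'.2.1 k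
    have hGgeb : ∀ k, topSum b k ≤ G k := by
      intro k
      refine le_csInf (hne k) ?_
      rintro y ⟨c', hc', rfl⟩
      exact hc'.2.2 k
    have hG0 : G 0 = 0 := by
      refine le_antisymm ?_ ?_
      · have := hGle delta hdS 0
        rwa [MajAux.topSum_zero] at this
      · have := hGgea 0
        rwa [MajAux.topSum_zero] at this
    have hG1 : ∀ k, n ≤ k → G k = 1 := by
      intro k hk
      refine le_antisymm ?_ ?_
      · have := hGle delta hdS k
        rwa [MajAux.topSum_eq_one hbuild1.1 hk] at this
      · have := hGgea k
        rwa [MajAux.topSum_eq_one ha hk] at this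
    have hGmono : Monotone G := by
      apply monotone_nat_of_le_succ
      intro k
      refine le_csInf (hne (k + 1)) ?_
      rintro y ⟨c', hc', rfl⟩
      exact (hGle c' hc' k).trans (MajAux.topSum_mono hc'.1.1 (Nat.le_succ k))
    have hGconc : ∀ k, G (k + 2) + G k ≤ 2 * G (k + 1) := by
      intro k
      have : (G (k + 2) + G k) / 2 ≤ G (k + 1) := by
        refine le_csInf (hne (k + 1)) ?_
        rintro y ⟨c', hc', rfl⟩
        have h1 := hGle c' hc' (k + 2)
        have h2 := hGle c' hc' k
        have h3 := MajAux.topSum_concave hc'.1.1 k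
        linarith
      linarith
    obtain ⟨hprob, htop⟩ := MajAux.build (n := n) G hG0 hG1 hGmono hGconc
    set c : Fin n → ℝ := fun i : Fin n => G (↑i + 1) - G ↑i with hcdef
    have hjoin : IsMajJoin a b c := by
      refine ⟨hprob, fun k => ?_, fun k => ?_, fun c' hp hma hmb k => ?_⟩
      · rw [htop k]; exact hGgea k
      · rw [htop k]; exact hGgeb k
      · rw [htop k]; exact hGle c' ⟨hp, hma, hmb⟩ k
    refine ⟨c, hjoin, fun c'' hc'' => ?_⟩
    have h1 : Maj c c'' := hjoin.2.2.2 c'' hc''.1 hc''.2.1 hc''.2.2.1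
    have h2 : Maj c'' c := hc''.2.2.2 c hprob hjoin.2.1 hjoin.2.2.1
    exact MajAux.sortDesc_eq_of_topSum fun k => le_antisymm (h2 k) (h1 k)
  · -- meet
    set g2 : ℕ → ℝ := fun k => min (topSum a k) (topSum b k) with hg2
    have hg20 : g2 0 = 0 := by
      simp [hg2, MajAux.topSum_zero]
    have hg21 : ∀ k, n ≤ k → g2 k = 1 := by
      intro k hk
      simp [hg2, MajAux.topSum_eq_one ha hk, MajAux.topSum_eq_one hb hk]
    have hg2mono : Monotone g2 := by
      intro i j hij
      exact le_min ((min_le_left _ _).trans (MajAux.topSum_mono ha.1 hij))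
        ((min_le_right _ _).trans (MajAux.topSum_mono hb.1 hij))
    have hg2conc : ∀ k, g2 (k + 2) + g2 k ≤ 2 * g2 (k + 1) := by
      intro k
      simp only [hg2]
      rcases le_total (topSum a (k + 1)) (topSum b (k + 1)) with h | h
      · rw [min_eq_left h]
        have h1 := min_le_left (topSum a (k + 2)) (topSum b (k + 2))
        have h2 := min_le_left (topSum a k) (topSum b k)
        have h3 := MajAux.topSum_concave ha.1 k
        linarith
      · rw [min_eq_right h]
        have h1 := min_le_right (topSum a (k + 2)) (topSum b (k + 2))
        have h2 := min_le_right (topSum a k) (topSum b k)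
        have h3 := MajAux.topSum_concave hb.1 k
        linarith
    obtain ⟨hprob, htop⟩ := MajAux.build (n := n) g2 hg20 hg21 hg2mono hg2conc
    set m : Fin n → ℝ := fun i : Fin n => g2 (↑i + 1) - g2 ↑i with hmdef
    have hmeet : IsMajMeet {a, b} m := by
      refine ⟨hprob, ?_, ?_⟩
      · intro p hp
        simp only [Set.mem_insert_iff, Set.mem_singleton_iff] at hp
        rcases hp with rfl | rfl
        · intro k; rw [htop k]; exact min_le_left _ _
        · intro k; rw [htop k]; exact min_le_right _ _
      · intro c' hp hmaj k
        rw [htop k]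
        exact le_min (hmaj a (by simp) k) (hmaj b (by simp) k)
    refine ⟨m, hmeet, fun m'' hm'' => ?_⟩
    have h1 : Maj m'' m := hmeet.2.2 m'' hm''.1 hm''.2.1
    have h2 : Maj m m'' := hm''.2.2 m hprob hmeet.2.1
    exact MajAux.sortDesc_eq_of_topSum fun k => le_antisymm (h1 k) (h2 k)
end

section
/- Let X = {p ∈ ℝⁿ : Ap ≥ α, Bp = β} be nonempty, where A, B are real matrices, α, β real vectors, inequalities are componentwise, and the constraints imply p ≥ 0 and 1ᵀp = 1 (so X is a subset of the probability simplex). Then for every k ∈ {1,…,n}, the minimum of Σ_{i=1}^k p_i^↓ over p ∈ X equals the optimal value of the linear program: maximize αᵀμ + βᵀν over vectors μ ≥ 0 and ν subject to 0 ≤ Aᵀμ + Bᵀν ≤ 1 (componentwise) and 1ᵀ(Aᵀμ + Bᵀν) = k. -/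
open Matrix Finset ComplexOrder

section LPAux
open scoped InnerProductSpace

open Finset

section Farkas

variable {ι κ : Type*} [Fintype ι] [Fintype κ]

/-- Conic Carathéodory: any nonnegative combination can be rewritten as one supported on a
linearly independent subfamily. -/
lemma exists_linIndep_rep {E : Type*} [AddCommGroup E] [Module ℝ E] (v : ι → E) :
    ∀ (N : ℕ) (y : ι → ℝ), (∀ i, 0 ≤ y i) → ((univ.filter (fun i => y i ≠ 0)).card ≤ N) →
    ∃ (S : Finset ι) (y' : ι → ℝ), (∀ i, 0 ≤ y' i) ∧ (∀ i ∉ S, y' i = 0) ∧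
      (∑ i, y' i • v i = ∑ i, y i • v i) ∧ LinearIndependent ℝ (fun i : S => v i) := by
  intro N
  induction N with
  | zero =>
    intro y hy hcard
    refine ⟨∅, y, hy, ?_, rfl, linearIndependent_empty_type⟩
    intro i _
    by_contra hne
    have : i ∈ univ.filter (fun i => y i ≠ 0) := by simp [hne]
    have := Finset.card_pos.mpr ⟨i, this⟩
    omega
  | succ N ih =>
    intro y hy hcard
    set S := univ.filter (fun i => y i ≠ 0) with hS
    by_cases hli : LinearIndependent ℝ (fun i : S => v i)
    · exact ⟨S, y, hy, fun i hi => by simpa [hS] using hi, rfl, hli⟩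
    · obtain ⟨g, hg0, i₁, hgi₁⟩ := Fintype.not_linearIndependent_iff.mp hli
      -- extend g to ι, possibly negated so that some coefficient is positive
      have key : ∀ g : S → ℝ, (∑ i : S, g i • v (i : ι) = 0) → (∃ i, 0 < g i) →
          ∃ (S' : Finset ι) (y' : ι → ℝ), (∀ i, 0 ≤ y' i) ∧ (∀ i ∉ S', y' i = 0) ∧
            (∑ i, y' i • v i = ∑ i, y i • v i) ∧ LinearIndependent ℝ (fun i : S' => v i) := by
        intro g hgsum ⟨ip, hip⟩
        classical
        set c : ι → ℝ := fun i => if h : i ∈ S then g ⟨i, h⟩ else 0 with hc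
        have hcsum : ∑ i, c i • v i = 0 := by
          rw [← Finset.sum_filter_of_ne (p := fun i => i ∈ S)
            (by intro i _ hne; by_contra h; simp [hc, h] at hne)]
          rw [show (univ.filter (fun i => i ∈ S)) = S by ext i; simp]
          rw [← Finset.sum_attach S (fun i => c i • v i)]
          rw [← hgsum]
          apply Finset.sum_congr rfl
          intro i _
          simp [hc, i.2]
        set T := univ.filter (fun i => 0 < c i) with hT
        have hTne : T.Nonempty := ⟨ip, by simp [hT, hc, ip.2, hip]⟩
        set t := T.inf' hTne (fun i => y i / c i) with ht
        obtain ⟨i₀, hi₀T, hi₀⟩ := Finset.exists_mem_eq_inf' hTne (fun i => y i / c i)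
        have hci₀ : 0 < c i₀ := by simpa [hT] using hi₀T
        have ht0 : 0 ≤ t := by
          rw [ht]
          apply Finset.le_inf'
          intro i hiT
          have hci : 0 < c i := by simpa [hT] using hiT
          exact div_nonneg (hy i) hci.le
        set y' : ι → ℝ := fun i => y i - t * c i with hy'
        have hy'0 : ∀ i, 0 ≤ y' i := by
          intro i
          rcases le_or_gt (c i) 0 with h | h
          · have : t * c i ≤ 0 := mul_nonpos_of_nonneg_of_nonpos ht0 h
            simp only [hy']; linarith [hy i]
          · have hiT : i ∈ T := by simp [hT, h]
            have h1 : t ≤ y i / c i := Finset.inf'_le (fun i => y i / c i) hiT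
            have h2 : t * c i ≤ y i := by
              rw [le_div_iff₀ h] at h1; linarith
            simp only [hy']; linarith
        have hy'supp : ∀ i, y' i ≠ 0 → (y i ≠ 0 ∧ i ≠ i₀) := by
          intro i hne
          constructor
          · intro h0
            have : i ∉ S := by simp [hS, h0]
            have : c i = 0 := by simp [hc, this]
            simp [hy', h0, this] at hne
          · intro h0
            apply hne
            rw [h0]
            have hx : t = y i₀ / c i₀ := by simpa using hi₀
            simp only [hy']
            rw [hx, div_mul_cancel₀ _ (ne_of_gt hci₀), sub_self]
        have hy'sum : ∑ i, y' i • v i = ∑ i, y i • v i := by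
          simp only [hy', sub_smul, Finset.sum_sub_distrib, mul_smul]
          rw [← Finset.smul_sum, hcsum, smul_zero, sub_zero]
        have hcard' : (univ.filter (fun i => y' i ≠ 0)).card ≤ N := by
          have hsub : (univ.filter (fun i => y' i ≠ 0)) ⊆ S.erase i₀ := by
            intro i hi
            simp only [mem_filter] at hi
            obtain ⟨h1, h2⟩ := hy'supp i hi.2
            exact Finset.mem_erase.mpr ⟨h2, by simp [hS, h1]⟩
          have hi₀S : i₀ ∈ S := by
            by_contra h
            simp [hc, h] at hci₀
          have := Finset.card_le_card hsub
          have := Finset.card_erase_of_mem hi₀S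
          omega
        obtain ⟨S', y'', h1, h2, h3, h4⟩ := ih y' hy'0 hcard'
        exact ⟨S', y'', h1, h2, by rw [h3, hy'sum], h4⟩
      rcases lt_trichotomy (g i₁) 0 with h | h | h
      · refine key (fun i => -g i) ?_ ⟨i₁, by show 0 < -g i₁; linarith⟩
        simp only [neg_smul, Finset.sum_neg_distrib, hg0, neg_zero]
      · exact absurd h hgi₁
      · exact key g hg0 ⟨i₁, h⟩

end Farkas


open Finset

variable {ι κ : Type*} [Fintype ι] [Fintype κ]

lemma exists_linIndep_rep' {E : Type*} [AddCommGroup E] [Module ℝ E] (v : ι → E)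
    (y : ι → ℝ) (hy : ∀ i, 0 ≤ y i) :
    ∃ (S : Finset ι) (y' : ι → ℝ), (∀ i, 0 ≤ y' i) ∧ (∀ i ∉ S, y' i = 0) ∧
      (∑ i, y' i • v i = ∑ i, y i • v i) ∧ LinearIndependent ℝ (fun i : S => v i) :=
  exists_linIndep_rep v (univ.filter (fun i => y i ≠ 0)).card y hy le_rfl

/-- The finitely generated cone. -/
def coneOf (v : ι → EuclideanSpace ℝ κ) : Set (EuclideanSpace ℝ κ) :=
  {x | ∃ y : ι → ℝ, (∀ i, 0 ≤ y i) ∧ ∑ i, y i • v i = x}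

lemma coneOf_isClosed (v : ι → EuclideanSpace ℝ κ) : IsClosed (coneOf v) := by
  classical
  have : coneOf v = ⋃ S ∈ {S : Finset ι | LinearIndependent ℝ (fun i : S => v i)},
      (fun y : S → ℝ => ∑ i : S, y i • v (i : ι)) '' {y | ∀ i, 0 ≤ y i} := by
    ext x
    simp only [Set.mem_iUnion, Set.mem_image, Set.mem_setOf_eq, coneOf]
    constructor
    · rintro ⟨y, hy, hsum⟩
      obtain ⟨S, y', h1, h2, h3, h4⟩ := exists_linIndep_rep' v y hy
      refine ⟨S, h4, fun i => y' i, fun i => h1 i, ?_⟩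
      rw [← hsum, ← h3]
      rw [show (∑ i : S, (fun i : S => y' (i : ι)) i • v (i : ι)) = ∑ i ∈ S, y' i • v i from
        Finset.sum_attach S (fun i => y' i • v i)]
      exact Finset.sum_subset (Finset.subset_univ S) (by
        intro i _ hiS
        rw [h2 i hiS, zero_smul])
    · rintro ⟨S, hS, y, hy, hsum⟩
      refine ⟨fun i => if h : i ∈ S then y ⟨i, h⟩ else 0, fun i => by dsimp; split <;> [exact hy _; rfl], ?_⟩
      rw [← hsum]
      rw [← Finset.sum_filter_of_ne (p := fun i => i ∈ S) (by
        intro i _ hne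
        by_contra h
        simp [h] at hne)]
      rw [show (univ.filter (fun i => i ∈ S)) = S by ext i; simp]
      rw [← Finset.sum_attach S (fun i => (if h : i ∈ S then y ⟨i, h⟩ else 0) • v i)]
      exact Finset.sum_congr rfl (fun i _ => by simp [i.2])
  rw [this]
  apply Set.Finite.isClosed_biUnion (Set.toFinite _)
  intro S hS
  have hinj : LinearMap.ker (LinearMap.lsum ℝ (fun _ : S => ℝ) ℝ
      (fun i => LinearMap.toSpanSingleton ℝ _ (v (i : ι)))) = ⊥ := by
    rw [LinearMap.ker_eq_bot']
    intro g hg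
    simp only [LinearMap.lsum_apply, LinearMap.coe_sum, Finset.sum_apply,
      LinearMap.comp_apply, LinearMap.proj_apply, LinearMap.toSpanSingleton_apply] at hg
    exact funext (Fintype.linearIndependent_iff.mp hS g hg)
  have hcl := (LinearMap.isClosedEmbedding_of_injective hinj).isClosedMap
  have : (fun y : S → ℝ => ∑ i : S, y i • v (i : ι)) = (LinearMap.lsum ℝ (fun _ : S => ℝ) ℝ
      (fun i => LinearMap.toSpanSingleton ℝ _ (v (i : ι)))) := by
    funext y
    simp [LinearMap.lsum_apply, LinearMap.toSpanSingleton_apply]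
  rw [this]
  apply hcl
  have : {y : S → ℝ | ∀ i, 0 ≤ y i} = ⋂ i, (fun y : S → ℝ => y i) ⁻¹' Set.Ici 0 := by
    ext y; simp
  rw [this]
  exact isClosed_iInter (fun i => isClosed_Ici.preimage (continuous_apply i))

open scoped InnerProductSpace in
lemma farkas_cone (v : ι → EuclideanSpace ℝ κ) (w : EuclideanSpace ℝ κ)
    (h : ∀ z : EuclideanSpace ℝ κ, (∀ i, 0 ≤ ⟪v i, z⟫_ℝ) → 0 ≤ ⟪w, z⟫_ℝ) :
    ∃ y : ι → ℝ, (∀ i, 0 ≤ y i) ∧ ∑ i, y i • v i = w := by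
  classical
  by_contra hw
  have hwne : w ∉ coneOf v := fun hmem => hw hmem
  set K : ConvexCone ℝ (EuclideanSpace ℝ κ) :=
    { carrier := coneOf v
      smul_mem' := by
        rintro c hc x ⟨y, hy, hsum⟩
        exact ⟨fun i => c * y i, fun i => mul_nonneg hc.le (hy i), by
          simp only [mul_smul, ← Finset.smul_sum, hsum]⟩
      add_mem' := by
        rintro x ⟨y, hy, hsum⟩ x' ⟨y', hy', hsum'⟩
        exact ⟨fun i => y i + y' i, fun i => add_nonneg (hy i) (hy' i), by
          simp only [add_smul, Finset.sum_add_distrib, hsum, hsum']⟩ } with hK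
  obtain ⟨z, hz1, hz2⟩ := ProperCone.hyperplane_separation' (x₀ := w)
    ({ carrier := coneOf v
       add_mem' := fun ha hb => K.add_mem' ha hb
       zero_mem' := ⟨fun _ => 0, fun i => le_refl 0, by simp⟩
       smul_mem' := by
         rintro c x ⟨y, hy, hsum⟩
         exact ⟨fun i => (c : ℝ) * y i, fun i => mul_nonneg c.2 (hy i), by
           rw [← hsum]; change _ = (c : ℝ) • (∑ i, y i • v i : EuclideanSpace ℝ κ); rw [Finset.smul_sum]; simp only [mul_smul]⟩
       isClosed' := coneOf_isClosed v } : ProperCone ℝ (EuclideanSpace ℝ κ)) hwne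
  have hvz : ∀ i, 0 ≤ ⟪v i, z⟫_ℝ := by
    intro i
    apply hz1
    exact ⟨fun j => if j = i then 1 else 0, fun j => by dsimp only; split <;> norm_num, by simp⟩
  have := h z hvz
  linarith



/-- Concrete Farkas lemma. -/
lemma farkas_fun (M : ι → κ → ℝ) (w : κ → ℝ)
    (h : ∀ z : κ → ℝ, (∀ i, 0 ≤ ∑ j, M i j * z j) → 0 ≤ ∑ j, w j * z j) :
    ∃ y : ι → ℝ, (∀ i, 0 ≤ y i) ∧ ∀ j, ∑ i, y i * M i j = w j := by
  have key := farkas_cone (fun i => (WithLp.equiv 2 (κ → ℝ)).symm (M i))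
    ((WithLp.equiv 2 (κ → ℝ)).symm w) ?_
  · obtain ⟨y, hy, hsum⟩ := key
    refine ⟨y, hy, fun j => ?_⟩
    have hsum' : (∑ i, y i • M i : κ → ℝ) = w := by
      simpa [WithLp.ofLp_sum, WithLp.ofLp_smul] using congrArg WithLp.ofLp hsum
    have := congrFun hsum' j
    simpa [Finset.sum_apply, Pi.smul_apply, smul_eq_mul] using this
  · intro z hz
    have h1 : ∀ i, (⟪(WithLp.equiv 2 (κ → ℝ)).symm (M i), z⟫_ℝ) = ∑ j, M i j * z j := by
      intro i
      simp [PiLp.inner_apply, RCLike.inner_apply, mul_comm]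
    have h2 : (⟪(WithLp.equiv 2 (κ → ℝ)).symm w, z⟫_ℝ) = ∑ j, w j * z j := by
      simp [PiLp.inner_apply, RCLike.inner_apply, mul_comm]
    rw [h2]
    exact h z (fun i => by rw [← h1 i]; exact hz i)



/-- Affine Farkas / LP strong duality core: if the system `Mx ≥ b` is feasible and `c·x ≥ v`
on the feasible set, then there is `y ≥ 0` with `yᵀM = c` and `y·b ≥ v`. -/
lemma affine_farkas (M : ι → κ → ℝ) (b : ι → ℝ) (c : κ → ℝ) (v : ℝ)
    (hfeas : ∃ x : κ → ℝ, ∀ i, b i ≤ ∑ j, M i j * x j)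
    (hbound : ∀ x : κ → ℝ, (∀ i, b i ≤ ∑ j, M i j * x j) → v ≤ ∑ j, c j * x j) :
    ∃ y : ι → ℝ, (∀ i, 0 ≤ y i) ∧ (∀ j, ∑ i, y i * M i j = c j) ∧ v ≤ ∑ i, y i * b i := by
  classical
  obtain ⟨x₀, hx₀⟩ := hfeas
  -- augmented system over variables (x, τ) : κ ⊕ Unit, rows : ι ⊕ Unit
  set M' : (ι ⊕ Unit) → (κ ⊕ Unit) → ℝ := fun i j =>
    Sum.elim (fun i => Sum.elim (fun j => M i j) (fun _ => -b i) j)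
      (fun _ => Sum.elim (fun _ => (0:ℝ)) (fun _ => 1) j) i with hM'
  set w : (κ ⊕ Unit) → ℝ := Sum.elim c (fun _ => -v) with hw
  have key := farkas_fun M' w ?_
  · obtain ⟨y, hy, hsum⟩ := key
    refine ⟨fun i => y (Sum.inl i), fun i => hy _, fun j => ?_, ?_⟩
    · have := hsum (Sum.inl j)
      rw [Fintype.sum_sum_type] at this
      simpa [hM', hw] using this
    · have := hsum (Sum.inr ())
      rw [Fintype.sum_sum_type] at this
      simp only [hM', hw, Sum.elim_inl, Sum.elim_inr, Fintype.univ_punit, Finset.sum_singleton,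
        mul_one, mul_neg] at this
      have h0 : 0 ≤ y (Sum.inr ()) := hy _
      have hsplit : ∑ x, -(y (Sum.inl x) * b x) = -∑ x, y (Sum.inl x) * b x :=
        Finset.sum_neg_distrib _
      linarith [this, hsplit]
  · intro z hz
    have hτ0 : 0 ≤ z (Sum.inr ()) := by
      have := hz (Sum.inr ())
      simpa [hM', Fintype.sum_sum_type] using this
    have hrow : ∀ i, b i * z (Sum.inr ()) ≤ ∑ j, M i j * z (Sum.inl j) := by
      intro i
      have := hz (Sum.inl i)
      rw [Fintype.sum_sum_type] at this
      simp only [hM', Sum.elim_inl, Sum.elim_inr, Fintype.univ_punit, Finset.sum_singleton,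
        mul_neg, neg_mul] at this
      linarith
    have goal : v * z (Sum.inr ()) ≤ ∑ j, c j * z (Sum.inl j) := by
      rcases eq_or_lt_of_le hτ0 with h0 | h0
      · -- τ = 0 : recession direction
        have hMx : ∀ i, 0 ≤ ∑ j, M i j * z (Sum.inl j) := by
          intro i; have h := hrow i; rw [← h0, mul_zero] at h; exact h
        rw [← h0, mul_zero]
        by_contra hcx
        push_neg at hcx
        set t : ℝ := ((∑ j, c j * x₀ j) - v + 1) / (-(∑ j, c j * z (Sum.inl j))) with htdef
        have hden : 0 < -(∑ j, c j * z (Sum.inl j)) := by linarith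
        have hnum : 0 < (∑ j, c j * x₀ j) - v + 1 := by
          have := hbound x₀ hx₀; linarith
        have ht : 0 < t := div_pos hnum hden
        have hfeas' : ∀ i, b i ≤ ∑ j, M i j * (x₀ j + t * z (Sum.inl j)) := by
          intro i
          have expand : ∑ j, M i j * (x₀ j + t * z (Sum.inl j))
              = (∑ j, M i j * x₀ j) + t * ∑ j, M i j * z (Sum.inl j) := by
            rw [Finset.mul_sum, ← Finset.sum_add_distrib]
            apply Finset.sum_congr rfl; intro j _; ring
          rw [expand]
          have := mul_nonneg ht.le (hMx i)
          linarith [hx₀ i]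
        have hb := hbound _ hfeas'
        have expand : ∑ j, c j * (x₀ j + t * z (Sum.inl j))
            = (∑ j, c j * x₀ j) + t * ∑ j, c j * z (Sum.inl j) := by
          rw [Finset.mul_sum, ← Finset.sum_add_distrib]
          apply Finset.sum_congr rfl; intro j _; ring
        rw [expand] at hb
        have hkey : t * (∑ j, c j * z (Sum.inl j)) = -((∑ j, c j * x₀ j) - v + 1) := by
          rw [htdef, div_mul_eq_mul_div, div_eq_iff hden.ne']
          ring
        rw [hkey] at hb
        linarith
      · -- τ > 0 : scale
        have hfeas' : ∀ i, b i ≤ ∑ j, M i j * (z (Sum.inl j) / z (Sum.inr ())) := by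
          intro i
          have expand : ∑ j, M i j * (z (Sum.inl j) / z (Sum.inr ()))
              = (∑ j, M i j * z (Sum.inl j)) / z (Sum.inr ()) := by
            rw [Finset.sum_div]; apply Finset.sum_congr rfl; intro j _; ring
          rw [expand, le_div_iff₀ h0]
          exact hrow i
        have hb := hbound _ hfeas'
        have expand : ∑ j, c j * (z (Sum.inl j) / z (Sum.inr ()))
            = (∑ j, c j * z (Sum.inl j)) / z (Sum.inr ()) := by
          rw [Finset.sum_div]; apply Finset.sum_congr rfl; intro j _; ring
        rw [expand, le_div_iff₀ h0] at hb
        linarith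
    -- convert goal to the sum form
    rw [Fintype.sum_sum_type]
    simp only [hw, Sum.elim_inl, Sum.elim_inr, Fintype.univ_punit, Finset.sum_singleton,
      hM', neg_mul]
    linarith

end LPAux


section TopSum
variable {n : ℕ}

lemma sortDesc_anti (x : Fin n → ℝ) : Antitone (sortDesc x) := by
  intro i j hij
  exact Tuple.monotone_sort x (Fin.rev_le_rev.mpr hij)

lemma card_filter_lt (k : ℕ) (hkn : k ≤ n) :
    (Finset.univ.filter (fun i : Fin n => (i : ℕ) < k)).card = k := by
  have : Finset.univ.filter (fun i : Fin n => (i : ℕ) < k)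
      = (Finset.univ : Finset (Fin k)).map ⟨Fin.castLE hkn, Fin.castLE_injective hkn⟩ := by
    ext i
    simp only [mem_filter, mem_univ, true_and, Finset.mem_map, Function.Embedding.coeFn_mk]
    constructor
    · intro hi
      exact ⟨⟨(i : ℕ), hi⟩, by ext; simp⟩
    · rintro ⟨j, _, rfl⟩
      exact j.2
  rw [this, Finset.card_map, Finset.card_univ, Fintype.card_fin]

/-- `topSum` is the sum over an explicit `k`-element subset. -/
lemma topSum_eq_sum_subset (x : Fin n → ℝ) (k : ℕ) (hkn : k ≤ n) :
    ∃ T : Finset (Fin n), T.card = k ∧ topSum x k = ∑ i ∈ T, x i := by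
  classical
  set K := Finset.univ.filter (fun i : Fin n => (i : ℕ) < k) with hK
  have hinj : Function.Injective (fun i : Fin n => (Tuple.sort x) i.rev) := by
    intro a b hab
    have := (Tuple.sort x).injective hab
    exact Fin.rev_injective this
  refine ⟨K.image (fun i => (Tuple.sort x) i.rev), ?_, ?_⟩
  · rw [Finset.card_image_of_injective _ hinj, hK, card_filter_lt k hkn]
  · rw [Finset.sum_image (fun a _ b _ h => hinj h)]
    rfl

/-- Key inequality: for `0 ≤ y ≤ 1` with `∑ y = k`, `∑ y i * x i ≤ topSum x k`. -/
lemma dot_le_topSum (x y : Fin n → ℝ) (k : ℕ) (hk1 : 1 ≤ k) (hkn : k ≤ n)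
    (hy0 : ∀ i, 0 ≤ y i) (hy1 : ∀ i, y i ≤ 1) (hys : ∑ i, y i = (k : ℝ)) :
    ∑ i, y i * x i ≤ topSum x k := by
  classical
  set e : Equiv.Perm (Fin n) := Fin.revPerm.trans (Tuple.sort x) with he
  have hsum : ∑ i, y i * x i = ∑ i, y (e i) * x (e i) := (Equiv.sum_comp e fun i => y i * x i).symm
  have hys' : ∑ i, y (e i) = (k : ℝ) := by rw [Equiv.sum_comp e y, hys]
  have hq : ∀ i, x (e i) = sortDesc x i := fun i => rfl
  set K := Finset.univ.filter (fun i : Fin n => (i : ℕ) < k) with hK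
  have hkpos : 0 < k := hk1
  have hkn' : k - 1 < n := by omega
  set i₀ : Fin n := ⟨k - 1, hkn'⟩ with hi₀
  have hqK : ∀ i ∈ K, sortDesc x i₀ ≤ sortDesc x i := by
    intro i hi
    apply sortDesc_anti
    simp only [hK, mem_filter] at hi
    exact Fin.le_def.mpr (by simp [hi₀]; omega)
  have hqKc : ∀ i ∈ Kᶜ, sortDesc x i ≤ sortDesc x i₀ := by
    intro i hi
    apply sortDesc_anti
    simp only [hK, Finset.mem_compl, mem_filter, mem_univ, true_and, not_lt] at hi
    exact Fin.le_def.mpr (by simp [hi₀]; omega)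
  have hcard : (K.card : ℝ) = (k : ℝ) := by rw [hK, card_filter_lt k hkn]
  -- abbreviations
  set q : Fin n → ℝ := sortDesc x with hq'
  set Y : Fin n → ℝ := fun i => y (e i) with hY
  have hsplit : ∑ i, Y i * q i = ∑ i ∈ K, Y i * q i + ∑ i ∈ Kᶜ, Y i * q i :=
    (Finset.sum_add_sum_compl K _).symm
  have hsplitY : ∑ i ∈ K, Y i + ∑ i ∈ Kᶜ, Y i = (k : ℝ) := by
    rw [Finset.sum_add_sum_compl K Y]; exact hys'
  have hA1 : ∑ i ∈ K, (1 - Y i) * q i₀ ≤ ∑ i ∈ K, (1 - Y i) * q i := by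
    apply Finset.sum_le_sum
    intro i hi
    exact mul_le_mul_of_nonneg_left (hqK i hi) (by linarith [hy1 (e i)])
  have hA2 : ∑ i ∈ Kᶜ, Y i * q i ≤ ∑ i ∈ Kᶜ, Y i * q i₀ := by
    apply Finset.sum_le_sum
    intro i hi
    exact mul_le_mul_of_nonneg_left (hqKc i hi) (hy0 (e i))
  have hE1 : ∑ i ∈ K, (1 - Y i) * q i = ∑ i ∈ K, q i - ∑ i ∈ K, Y i * q i := by
    rw [← Finset.sum_sub_distrib]; apply Finset.sum_congr rfl; intro i _; ring
  have hE2 : ∑ i ∈ K, (1 - Y i) * q i₀ = (k : ℝ) * q i₀ - (∑ i ∈ K, Y i) * q i₀ := by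
    rw [← Finset.sum_mul, Finset.sum_sub_distrib, Finset.sum_const, nsmul_eq_mul, hcard]
    ring
  have hE3 : ∑ i ∈ Kᶜ, Y i * q i₀ = (∑ i ∈ Kᶜ, Y i) * q i₀ := by rw [Finset.sum_mul]
  have htop : topSum x k = ∑ i ∈ K, q i := rfl
  rw [hsum]
  have heq : ∑ i, y (e i) * x (e i) = ∑ i, Y i * q i := by
    apply Finset.sum_congr rfl; intro i _; rfl
  have hchain : (∑ i ∈ Kᶜ, Y i) * q i₀ = (k : ℝ) * q i₀ - (∑ i ∈ K, Y i) * q i₀ := by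
    have h9 : (∑ i ∈ Kᶜ, Y i) = (k : ℝ) - ∑ i ∈ K, Y i := by linarith
    rw [h9]; ring
  rw [heq, htop, hsplit]
  linarith [hA1, hA2, hE1, hE2, hE3, hchain]



/-- `topSum` as a max over `k`-subsets. -/
lemma topSum_eq_sup' (k : ℕ) (hk1 : 1 ≤ k) (hkn : k ≤ n)
    (hne : ((univ : Finset (Fin n)).powersetCard k).Nonempty) (x : Fin n → ℝ) :
    topSum x k = ((univ : Finset (Fin n)).powersetCard k).sup' hne (fun T => ∑ i ∈ T, x i) := by
  classical
  apply le_antisymm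
  · obtain ⟨T, hTcard, hTsum⟩ := topSum_eq_sum_subset x k hkn
    rw [hTsum]
    exact Finset.le_sup' (fun T => ∑ i ∈ T, x i) (Finset.mem_powersetCard.mpr ⟨Finset.subset_univ T, hTcard⟩)
  · apply Finset.sup'_le
    intro T hT
    obtain ⟨-, hTcard⟩ := Finset.mem_powersetCard.mp hT
    have key := dot_le_topSum x (fun i => if i ∈ T then 1 else 0) k hk1 hkn
      (fun i => by split <;> norm_num)
      (fun i => by split <;> norm_num)
      (by rw [← hTcard]; simp [Finset.sum_ite_mem, Finset.univ_inter])
    calc ∑ i ∈ T, x i = ∑ i, (if i ∈ T then (1:ℝ) else 0) * x i := by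
          rw [Finset.sum_congr rfl (fun i (_ : i ∈ univ) => by
            rw [ite_mul, one_mul, zero_mul]), Finset.sum_ite_mem, Finset.univ_inter]
      _ ≤ topSum x k := key

lemma topSum_continuous (k : ℕ) (hk1 : 1 ≤ k) (hkn : k ≤ n) :
    Continuous (fun x : Fin n → ℝ => topSum x k) := by
  classical
  have hne : ((univ : Finset (Fin n)).powersetCard k).Nonempty :=
    Finset.powersetCard_nonempty.mpr (by simpa using hkn)
  have : (fun x : Fin n → ℝ => topSum x k)
      = fun x => ((univ : Finset (Fin n)).powersetCard k).sup' hne (fun T => ∑ i ∈ T, x i) := by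
    funext x; exact topSum_eq_sup' k hk1 hkn hne x
  rw [this]
  rw [continuous_iff_continuousAt]
  intro x
  exact Filter.Tendsto.finset_sup'_nhds_apply hne
    (fun T _ => (continuous_finset_sum T (fun i _ => continuous_apply i)).continuousAt)

end TopSum

/-- Weak duality. -/
lemma weak_duality {n m₁ m₂ : ℕ} (A : Matrix (Fin m₁) (Fin n) ℝ) (B : Matrix (Fin m₂) (Fin n) ℝ)
    (α : Fin m₁ → ℝ) (β : Fin m₂ → ℝ) (p : Fin n → ℝ)
    (hp1 : ∀ i, α i ≤ (A *ᵥ p) i) (hp2 : B *ᵥ p = β)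
    (k : ℕ) (hk1 : 1 ≤ k) (hkn : k ≤ n)
    (μ : Fin m₁ → ℝ) (ν : Fin m₂ → ℝ) (hμ : ∀ i, 0 ≤ μ i)
    (h01 : ∀ j, 0 ≤ (μ ᵥ* A + ν ᵥ* B) j ∧ (μ ᵥ* A + ν ᵥ* B) j ≤ 1)
    (hsumk : (∑ j, (μ ᵥ* A + ν ᵥ* B) j) = (k : ℝ)) :
    α ⬝ᵥ μ + β ⬝ᵥ ν ≤ topSum p k := by
  classical
  have h1 : α ⬝ᵥ μ ≤ ∑ i, μ i * (A *ᵥ p) i := by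
    rw [dotProduct]
    apply Finset.sum_le_sum
    intro i _
    rw [mul_comm]
    exact mul_le_mul_of_nonneg_left (hp1 i) (hμ i)
  have h2 : β ⬝ᵥ ν = ∑ i, ν i * (B *ᵥ p) i := by
    rw [← hp2, dotProduct]
    apply Finset.sum_congr rfl
    intro i _; ring
  have hA : ∑ i, μ i * (A *ᵥ p) i = ∑ j, (μ ᵥ* A) j * p j := by
    simp only [Matrix.mulVec, Matrix.vecMul, dotProduct, Finset.mul_sum, Finset.sum_mul]
    rw [Finset.sum_comm]
    exact Finset.sum_congr rfl (fun j _ => Finset.sum_congr rfl (fun i _ => by ring))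
  have hB : ∑ i, ν i * (B *ᵥ p) i = ∑ j, (ν ᵥ* B) j * p j := by
    simp only [Matrix.mulVec, Matrix.vecMul, dotProduct, Finset.mul_sum, Finset.sum_mul]
    rw [Finset.sum_comm]
    exact Finset.sum_congr rfl (fun j _ => Finset.sum_congr rfl (fun i _ => by ring))
  have h3 : ∑ i, μ i * (A *ᵥ p) i + ∑ i, ν i * (B *ᵥ p) i
      = ∑ j, (μ ᵥ* A + ν ᵥ* B) j * p j := by
    simp only [Pi.add_apply, add_mul, Finset.sum_add_distrib]
    rw [← hA, ← hB]
  have h4 := dot_le_topSum p (fun j => (μ ᵥ* A + ν ᵥ* B) j) k hk1 hkn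
    (fun j => (h01 j).1) (fun j => (h01 j).2) hsumk
  calc α ⬝ᵥ μ + β ⬝ᵥ ν ≤ ∑ i, μ i * (A *ᵥ p) i + ∑ i, ν i * (B *ᵥ p) i := by
        rw [h2] at *; linarith
    _ = ∑ j, (μ ᵥ* A + ν ᵥ* B) j * p j := h3
    _ ≤ topSum p k := h4


/-- LP duality for the minimum of the sum of the `k` largest entries over
`X = {p : Ap ≥ α, Bp = β}`, a nonempty subset of the probability simplex. -/
theorem stmt9 {n m₁ m₂ : ℕ} (A : Matrix (Fin m₁) (Fin n) ℝ) (B : Matrix (Fin m₂) (Fin n) ℝ)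
    (α : Fin m₁ → ℝ) (β : Fin m₂ → ℝ)
    (X : Set (Fin n → ℝ))
    (hXdef : X = {p | (∀ i, α i ≤ (A *ᵥ p) i) ∧ B *ᵥ p = β})
    (hne : X.Nonempty) (hprob : ∀ p ∈ X, IsProbVec p)
    (k : ℕ) (hk1 : 1 ≤ k) (hkn : k ≤ n) :
    ∃ v : ℝ, IsLeast ((fun p => topSum p k) '' X) v ∧
      IsGreatest {t : ℝ | ∃ (μ : Fin m₁ → ℝ) (ν : Fin m₂ → ℝ),
        (∀ i, 0 ≤ μ i) ∧
        (∀ j, 0 ≤ (μ ᵥ* A + ν ᵥ* B) j ∧ (μ ᵥ* A + ν ᵥ* B) j ≤ 1) ∧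
        (∑ j, (μ ᵥ* A + ν ᵥ* B) j) = (k : ℝ) ∧
        t = α ⬝ᵥ μ + β ⬝ᵥ ν} v := by
  classical
  -- Step 1: X is compact
  have hXsub : X ⊆ Metric.closedBall 0 1 := by
    intro p hp
    obtain ⟨hp0, hp1⟩ := hprob p hp
    rw [Metric.mem_closedBall, dist_zero_right]
    apply pi_norm_le_iff_of_nonneg zero_le_one |>.mpr
    intro i
    rw [Real.norm_eq_abs, abs_le]
    constructor
    · linarith [hp0 i]
    · calc p i ≤ ∑ j, p j := Finset.single_le_sum (fun j _ => hp0 j) (Finset.mem_univ i)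
        _ = 1 := hp1
  have hXclosed : IsClosed X := by
    rw [hXdef]
    have : {p : Fin n → ℝ | (∀ i, α i ≤ (A *ᵥ p) i) ∧ B *ᵥ p = β}
        = (⋂ i, {p : Fin n → ℝ | α i ≤ (A *ᵥ p) i}) ∩ (⋂ i, {p : Fin n → ℝ | (B *ᵥ p) i = β i}) := by
      ext p
      simp only [Set.mem_setOf_eq, Set.mem_inter_iff, Set.mem_iInter]
      constructor
      · rintro ⟨h1, h2⟩; exact ⟨h1, fun i => by rw [h2]⟩
      · rintro ⟨h1, h2⟩; exact ⟨h1, funext h2⟩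
    rw [this]
    have hcontA : ∀ i, Continuous (fun p : Fin n → ℝ => (A *ᵥ p) i) := by
      intro i
      simp only [Matrix.mulVec, dotProduct]
      exact continuous_finset_sum _ (fun j _ => continuous_const.mul (continuous_apply j))
    have hcontB : ∀ i, Continuous (fun p : Fin n → ℝ => (B *ᵥ p) i) := by
      intro i
      simp only [Matrix.mulVec, dotProduct]
      exact continuous_finset_sum _ (fun j _ => continuous_const.mul (continuous_apply j))
    exact IsClosed.inter
      (isClosed_iInter (fun i => isClosed_le continuous_const (hcontA i)))
      (isClosed_iInter (fun i => isClosed_eq (hcontB i) continuous_const))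
  have hXcompact : IsCompact X :=
    (isCompact_closedBall (0 : Fin n → ℝ) 1).of_isClosed_subset hXclosed hXsub
  -- Step 2: the minimum exists
  obtain ⟨p₀, hp₀, hmin⟩ := hXcompact.exists_isMinOn hne
    (topSum_continuous k hk1 hkn).continuousOn
  set v := topSum p₀ k with hv
  have hlb : ∀ p ∈ X, v ≤ topSum p k := fun p hp => hmin hp
  have hIsLeast : IsLeast ((fun p => topSum p k) '' X) v :=
    ⟨⟨p₀, hp₀, rfl⟩, by rintro t ⟨p, hp, rfl⟩; exact hlb p hp⟩
  refine ⟨v, hIsLeast, ?_, ?_⟩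
  · -- membership in the dual set via strong duality
    -- set up the big LP
    obtain ⟨pI, hpI⟩ := hne
    have hpIX := hpI
    rw [hXdef] at hpIX
    obtain ⟨hpI1, hpI2⟩ := hpIX
    obtain ⟨hpI0, -⟩ := hprob pI hpI
    set Mbig : ((Fin m₁ ⊕ Fin m₂ ⊕ Fin m₂) ⊕ (Fin n ⊕ Fin n)) → (Fin n ⊕ (Unit ⊕ Fin n)) → ℝ := Sum.elim
      (Sum.elim (fun i => Sum.elim (fun j => A i j) (fun _ => (0:ℝ)))
        (Sum.elim (fun i => Sum.elim (fun j => B i j) (fun _ => 0))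
          (fun i => Sum.elim (fun j => -B i j) (fun _ => 0))))
      (Sum.elim (fun i => Sum.elim (fun j => if j = i then (-1:ℝ) else 0)
                   (Sum.elim (fun _ => 1) (fun j => if j = i then 1 else 0)))
        (fun i => Sum.elim (fun _ => 0)
          (Sum.elim (fun _ => 0) (fun j => if j = i then 1 else 0)))) with hMbig
    set bbig : ((Fin m₁ ⊕ Fin m₂ ⊕ Fin m₂) ⊕ (Fin n ⊕ Fin n)) → ℝ := Sum.elim (Sum.elim α (Sum.elim β (fun i => -β i))) (fun _ => 0) with hbbig
    set cbig : (Fin n ⊕ (Unit ⊕ Fin n)) → ℝ := Sum.elim (fun _ => 0) (Sum.elim (fun _ => (k:ℝ)) (fun _ => 1)) with hcbig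
    -- a characterization of feasibility for the big LP
    have hfeas_iff : ∀ x : (Fin n ⊕ (Unit ⊕ Fin n)) → ℝ, (∀ i, bbig i ≤ ∑ j, Mbig i j * x j) ↔
        ((∀ i, α i ≤ (A *ᵥ (fun j => x (Sum.inl j))) i) ∧
         (B *ᵥ (fun j => x (Sum.inl j)) = β) ∧
         (∀ i, 0 ≤ x (Sum.inr (Sum.inr i)) + x (Sum.inr (Sum.inl ())) - x (Sum.inl i)) ∧
         (∀ i, 0 ≤ x (Sum.inr (Sum.inr i)))) := by
      intro x
      constructor
      · intro h
        refine ⟨fun i => ?_, funext fun i => le_antisymm ?_ ?_, fun i => ?_, fun i => ?_⟩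
        · have := h (Sum.inl (Sum.inl i))
          simpa [hMbig, hbbig, Fintype.sum_sum_type, Matrix.mulVec, dotProduct] using this
        · have := h (Sum.inl (Sum.inr (Sum.inr i)))
          simp only [hMbig, hbbig, Sum.elim_inl, Sum.elim_inr, Fintype.sum_sum_type,
            Fintype.univ_punit, Finset.sum_singleton, mul_zero, zero_mul, Finset.sum_const_zero,
            add_zero, neg_mul] at this
          simp only [Matrix.mulVec, dotProduct]
          have hms : ∑ j, -(B i j * x (Sum.inl j)) = -∑ j, B i j * x (Sum.inl j) :=
            Finset.sum_neg_distrib _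
          linarith [this, hms]
        · have := h (Sum.inl (Sum.inr (Sum.inl i)))
          simpa [hMbig, hbbig, Fintype.sum_sum_type, Matrix.mulVec, dotProduct] using this
        · have := h (Sum.inr (Sum.inl i))
          simp only [hMbig, hbbig, Sum.elim_inl, Sum.elim_inr, Fintype.sum_sum_type,
            Fintype.univ_punit, Finset.sum_singleton, one_mul, ite_mul, neg_one_mul, zero_mul,
            Finset.sum_ite_eq', Finset.mem_univ, if_true] at this
          linarith [this]
        · have := h (Sum.inr (Sum.inr i))
          simpa [hMbig, hbbig, Fintype.sum_sum_type, ite_mul, zero_mul,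
            Finset.sum_ite_eq', Finset.mem_univ] using this
      · rintro ⟨h1, h2, h3, h4⟩ i
        rcases i with (i | (i | i)) | (i | i)
        · simpa [hMbig, hbbig, Fintype.sum_sum_type, Matrix.mulVec, dotProduct]
            using h1 i
        · have := congrFun h2 i
          simp only [Matrix.mulVec, dotProduct] at this
          simp [hMbig, hbbig, Fintype.sum_sum_type, this]
        · have := congrFun h2 i
          simp only [Matrix.mulVec, dotProduct] at this
          simp only [hMbig, hbbig, Sum.elim_inl, Sum.elim_inr, Fintype.sum_sum_type,
            Fintype.univ_punit, Finset.sum_singleton, mul_zero, zero_mul,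
            Finset.sum_const_zero, add_zero, neg_mul]
          have hms : ∑ j, -(B i j * x (Sum.inl j)) = -∑ j, B i j * x (Sum.inl j) :=
            Finset.sum_neg_distrib _
          linarith [this, hms]
        · have := h3 i
          simp only [hMbig, hbbig, Sum.elim_inl, Sum.elim_inr, Fintype.sum_sum_type,
            Fintype.univ_punit, Finset.sum_singleton, one_mul, ite_mul, neg_one_mul, zero_mul,
            Finset.sum_ite_eq', Finset.mem_univ, if_true]
          linarith
        · have := h4 i
          simpa [hMbig, hbbig, Fintype.sum_sum_type, ite_mul, zero_mul,
            Finset.sum_ite_eq', Finset.mem_univ] using this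
    have key := affine_farkas Mbig bbig cbig v ?_ ?_
    · obtain ⟨y, hy0, hyM, hyb⟩ := key
      set μ : Fin m₁ → ℝ := fun i => y (Sum.inl (Sum.inl i)) with hμdef
      set ν : Fin m₂ → ℝ := fun i => y (Sum.inl (Sum.inr (Sum.inl i))) - y (Sum.inl (Sum.inr (Sum.inr i))) with hνdef
      set w : Fin n → ℝ := fun i => y (Sum.inr (Sum.inl i)) with hwdef
      set z : Fin n → ℝ := fun i => y (Sum.inr (Sum.inr i)) with hzdef
      have hcol1 : ∀ j, (μ ᵥ* A + ν ᵥ* B) j = w j := by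
        intro j
        have h5 := hyM (Sum.inl j)
        simp only [hMbig, hcbig, Sum.elim_inl, Sum.elim_inr, Fintype.sum_sum_type,
          mul_ite, mul_neg, mul_one, mul_zero, Finset.sum_ite_eq, Finset.sum_ite_eq',
          Finset.mem_univ, if_true, Finset.sum_const_zero, add_zero] at h5
        simp only [Matrix.vecMul, dotProduct, Pi.add_apply, hμdef, hνdef, hwdef]
        have expand : ∑ i, (y (Sum.inl (Sum.inr (Sum.inl i))) - y (Sum.inl (Sum.inr (Sum.inr i)))) * B i j
            = ∑ i, y (Sum.inl (Sum.inr (Sum.inl i))) * B i j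
              + ∑ i, -(y (Sum.inl (Sum.inr (Sum.inr i))) * B i j) := by
          rw [← Finset.sum_add_distrib]; apply Finset.sum_congr rfl; intro i _; ring
        rw [expand]
        linarith [h5]
      have hw0 : ∀ j, 0 ≤ w j := fun j => hy0 _
      have hcol2 : ∑ j, w j = (k : ℝ) := by
        have := hyM (Sum.inr (Sum.inl ()))
        simpa [hMbig, hcbig, Fintype.sum_sum_type, mul_ite, mul_one, mul_zero] using this
      have hcol3 : ∀ j, w j + z j = 1 := by
        intro j
        have := hyM (Sum.inr (Sum.inr j))
        simpa [hMbig, hcbig, Fintype.sum_sum_type, mul_ite, mul_one, mul_zero,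
          Finset.sum_ite_eq', Finset.mem_univ] using this
      have hval : ∑ i, y i * bbig i = α ⬝ᵥ μ + β ⬝ᵥ ν := by
        simp only [hbbig, Sum.elim_inl, Sum.elim_inr, Fintype.sum_sum_type, mul_zero,
          Finset.sum_const_zero, add_zero, mul_neg]
        simp only [dotProduct, hμdef, hνdef]
        rw [show (∑ i, α i * y (Sum.inl (Sum.inl i))) = ∑ i, y (Sum.inl (Sum.inl i)) * α i from
          Finset.sum_congr rfl (fun i _ => mul_comm _ _)]
        rw [show (∑ i, β i * (y (Sum.inl (Sum.inr (Sum.inl i))) - y (Sum.inl (Sum.inr (Sum.inr i)))))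
            = ∑ i, y (Sum.inl (Sum.inr (Sum.inl i))) * β i
              + ∑ i, -(y (Sum.inl (Sum.inr (Sum.inr i))) * β i) by
          rw [← Finset.sum_add_distrib]; apply Finset.sum_congr rfl; intro i _; ring]
      -- dual feasibility
      have hμ0 : ∀ i, 0 ≤ μ i := fun i => hy0 _
      have h01 : ∀ j, 0 ≤ (μ ᵥ* A + ν ᵥ* B) j ∧ (μ ᵥ* A + ν ᵥ* B) j ≤ 1 := by
        intro j
        rw [hcol1 j]
        exact ⟨hw0 j, by linarith [hcol3 j, hy0 (Sum.inr (Sum.inr j))]⟩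
      have hsumk : (∑ j, (μ ᵥ* A + ν ᵥ* B) j) = (k : ℝ) := by
        rw [Finset.sum_congr rfl (fun j (_ : j ∈ univ) => hcol1 j)]
        exact hcol2
      have hge : v ≤ α ⬝ᵥ μ + β ⬝ᵥ ν := by rw [← hval]; exact hyb
      have hle : α ⬝ᵥ μ + β ⬝ᵥ ν ≤ v := by
        have hp₀X := hp₀
        rw [hXdef] at hp₀X
        exact weak_duality A B α β p₀ hp₀X.1 hp₀X.2 k hk1 hkn μ ν hμ0 h01 hsumk
      exact ⟨μ, ν, hμ0, h01, hsumk, le_antisymm hge hle⟩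
    · -- primal feasibility of the big LP
      refine ⟨Sum.elim pI (Sum.elim (fun _ => 0) pI), ?_⟩
      rw [hfeas_iff]
      refine ⟨?_, ?_, ?_, ?_⟩
      · intro i; simpa using hpI1 i
      · convert hpI2 using 2; rfl
      · intro i; simp
      · intro i; simpa using hpI0 i
    · -- boundedness: every feasible point has value ≥ v
      intro x hx
      rw [hfeas_iff] at hx
      obtain ⟨h1, h2, h3, h4⟩ := hx
      set p : Fin n → ℝ := fun j => x (Sum.inl j) with hpdef
      set t : ℝ := x (Sum.inr (Sum.inl ())) with htdef
      set s : Fin n → ℝ := fun j => x (Sum.inr (Sum.inr j)) with hsdef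
      have hpX : p ∈ X := by rw [hXdef]; exact ⟨h1, h2⟩
      have hv_le : v ≤ topSum p k := hlb p hpX
      obtain ⟨T, hTcard, hTsum⟩ := topSum_eq_sum_subset p k hkn
      have hstep : topSum p k ≤ (k : ℝ) * t + ∑ j, s j := by
        rw [hTsum]
        calc ∑ i ∈ T, p i ≤ ∑ i ∈ T, (t + s i) := by
              apply Finset.sum_le_sum
              intro i hi
              have := h3 i
              simp only [hpdef, htdef, hsdef]
              linarith
          _ = (T.card : ℝ) * t + ∑ i ∈ T, s i := by
              rw [Finset.sum_add_distrib, Finset.sum_const, nsmul_eq_mul]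
          _ ≤ (k : ℝ) * t + ∑ j, s j := by
              rw [hTcard]
              have : ∑ i ∈ T, s i ≤ ∑ j, s j :=
                Finset.sum_le_sum_of_subset_of_nonneg (Finset.subset_univ T)
                  (fun j _ _ => h4 j)
              linarith
      have hsum_eq : ∑ j, cbig j * x j = (k : ℝ) * t + ∑ j, s j := by
        simp only [hcbig, Sum.elim_inl, Sum.elim_inr, Fintype.sum_sum_type,
          Fintype.univ_punit, Finset.sum_singleton, zero_mul, Finset.sum_const_zero,
          one_mul, zero_add, htdef, hsdef]
      rw [hsum_eq]
      linarith
  · -- upper bound via weak duality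
    rintro t ⟨μ, ν, hμ0, h01, hsumk, rfl⟩
    have hp₀X := hp₀
    rw [hXdef] at hp₀X
    exact weak_duality A B α β p₀ hp₀X.1 hp₀X.2 k hk1 hkn μ ν hμ0 h01 hsumk
end

section
/- Let N ≥ 2 and let {|φ_l^+⟩} be the 2^{N−1} ‘plus’ GHZ-basis states |φ_{l_1…l_N}^+⟩ = (|l_1…l_N⟩ + |l̄_1…l̄_N⟩)/√2 with l_1 = 0, l_i ∈ {0,1}, l̄_i = 1 − l_i. Then for every probability distribution (q_l) over these labels, the N-qubit state ρ = Σ_l q_l |φ_l^+⟩⟨φ_l^+| has relative entropy of coherence C_r(ρ) = 1 with respect to the computational (incoherent) basis. -/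
open Matrix Finset ComplexOrder

/-- The `plus` GHZ basis state `|φ_l⁺⟩ = (|l⟩ + |l̄⟩)/√2`, as a vector in the
computational basis of `N` qubits. -/
noncomputable def ghzPlus (N : ℕ) (l : Fin N → Bool) : (Fin N → Bool) → ℂ :=
  fun b => (((Real.sqrt 2 : ℝ) : ℂ))⁻¹ *
    ((if b = l then 1 else 0) + (if b = (fun i => ! l i) then 1 else 0))


namespace Stmt11Aux
open Polynomial

lemma charpoly_conj {m : Type*} [Fintype m] [DecidableEq m]
    (U A V : Matrix m m ℂ) (h : U * V = 1) :
    (U * A * V).charpoly = A.charpoly := by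
  have hVU : V * U = 1 := mul_eq_one_comm.mp h
  have hmap : (U * A * V).charmatrix
      = U.map Polynomial.C * A.charmatrix * V.map Polynomial.C := by
    have hUV' : U.map (Polynomial.C : ℂ →+* ℂ[X]) * V.map Polynomial.C = 1 := by
      rw [← Matrix.map_mul, h, Matrix.map_one _ (map_zero _) (map_one _)]
    unfold Matrix.charmatrix
    rw [Matrix.mul_sub, Matrix.sub_mul]
    congr 1
    · rw [Matrix.scalar_apply, Matrix.mul_assoc, ← Matrix.smul_eq_diagonal_mul,
        Matrix.mul_smul, hUV', Matrix.smul_eq_diagonal_mul, Matrix.mul_one]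
    · simp only [RingHom.mapMatrix_apply, ← Matrix.map_mul]
  unfold Matrix.charpoly
  rw [hmap, Matrix.det_mul, Matrix.det_mul, mul_comm, ← mul_assoc, ← Matrix.det_mul,
    ← Matrix.map_mul, hVU, Matrix.map_one _ (map_zero _) (map_one _), Matrix.det_one, one_mul]


lemma charpoly_diagonal {m : Type*} [Fintype m] [DecidableEq m] (d : m → ℂ) :
    (Matrix.diagonal d).charpoly = ∏ i, (X - Polynomial.C (d i)) := by
  have : (Matrix.diagonal d).charmatrix = Matrix.diagonal fun i => X - Polynomial.C (d i) := by
    ext i j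
    by_cases h : i = j
    · subst h; simp
    · simp [Matrix.charmatrix_apply_ne _ _ _ h, Matrix.diagonal_apply_ne _ h]
  rw [Matrix.charpoly, this, Matrix.det_diagonal]


lemma roots_of_conj {m : Type*} [Fintype m] [DecidableEq m]
    {A : Matrix m m ℂ} (U : Matrix m m ℂ) (hU : U * star U = 1) (e : m → ℝ)
    (hA : A = U * Matrix.diagonal (fun i => ((e i : ℝ) : ℂ)) * star U) :
    A.charpoly.roots = Finset.univ.val.map (fun i => ((e i : ℝ) : ℂ)) := by
  rw [hA, charpoly_conj _ _ _ hU, charpoly_diagonal]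
  rw [Finset.prod_eq_multiset_prod]
  rw [show (Multiset.map (fun i => X - Polynomial.C ((e i : ℝ) : ℂ)) Finset.univ.val)
      = Multiset.map (fun a : ℂ => X - Polynomial.C a)
        (Finset.univ.val.map (fun i => ((e i : ℝ) : ℂ))) by simp [Multiset.map_map, Function.comp],
    Polynomial.roots_multiset_prod_X_sub_C]

lemma eigen_ms {m : Type*} [Fintype m] [DecidableEq m] {A : Matrix m m ℂ}
    (hA : A.IsHermitian) (U : Matrix m m ℂ) (hU : U * star U = 1) (d : m → ℝ)
    (hAU : A = U * Matrix.diagonal (fun i => ((d i : ℝ) : ℂ)) * star U) :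
    Finset.univ.val.map d = Finset.univ.val.map hA.eigenvalues := by
  have h1 := roots_of_conj U hU d hAU
  have hU2 : (hA.eigenvectorUnitary : Matrix m m ℂ) * star (hA.eigenvectorUnitary : Matrix m m ℂ) = 1 :=
    (Matrix.mem_unitaryGroup_iff).mp hA.eigenvectorUnitary.2
  have h2 := roots_of_conj (hA.eigenvectorUnitary : Matrix m m ℂ) hU2 hA.eigenvalues
    (by convert hA.spectral_theorem using 3; rw [Unitary.conjStarAlgAut_apply]; rfl)
  have h3 : Finset.univ.val.map (fun i => ((d i : ℝ) : ℂ))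
      = Finset.univ.val.map (fun i => ((hA.eigenvalues i : ℝ) : ℂ)) := h1 ▸ h2 ▸ rfl
  have h4 : Multiset.map Complex.ofReal (Finset.univ.val.map d)
      = Multiset.map Complex.ofReal (Finset.univ.val.map hA.eigenvalues) := by
    rw [Multiset.map_map, Multiset.map_map]; exact h3
  exact Multiset.map_injective Complex.ofReal_injective h4


lemma shannon_eq_of_multiset {m : Type*} [Fintype m] {p r : m → ℝ}
    (h : Finset.univ.val.map p = Finset.univ.val.map r) : shannon p = shannon r := by
  unfold shannon
  congr 1
  have e1 : ∀ g : m → ℝ, (∑ i, g i * Real.logb 2 (g i))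
      = ((Finset.univ.val.map g).map (fun x => x * Real.logb 2 x)).sum := by
    intro g
    rw [Multiset.map_map]
    rfl
  rw [e1, e1, h]


variable {N : ℕ}

def flipv (l : Fin N → Bool) : Fin N → Bool := fun i => !l i
lemma flipv_flipv (l : Fin N → Bool) : flipv (flipv l) = l := by funext i; simp [flipv]
lemma flipv_bij : Function.Bijective (flipv (N := N)) := Function.Involutive.bijective flipv_flipv
lemma flipv_ne (hN : 0 < N) (l : Fin N → Bool) : flipv l ≠ l := by
  intro h
  have := congrFun h ⟨0, hN⟩
  simp [flipv] at this
lemma eq_flipv_iff (b l : Fin N → Bool) : b = flipv l ↔ flipv b = l := by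
  constructor
  · rintro rfl; exact flipv_flipv l
  · rintro rfl; exact (flipv_flipv b).symm


lemma sum_flipv (f : (Fin N → Bool) → ℝ) : ∑ b, f (flipv b) = ∑ b, f b :=
  Function.Bijective.sum_comp flipv_bij f


lemma shannon_half (hN : 0 < N) (q : (Fin N → Bool) → ℝ) (hqsum : ∑ l, q l = 1)
    (hsupp : ∀ l : Fin N → Bool, l ⟨0, hN⟩ = true → q l = 0) :
    shannon (fun b => (q b + q (flipv b)) / 2) = shannon q + 1 := by
  have hg2 : ∑ b, (q b + q (flipv b)) = 2 := by
    rw [Finset.sum_add_distrib, hqsum, sum_flipv q, hqsum]; norm_num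
  have stepA : ∀ b, (q b + q (flipv b))/2 * Real.logb 2 ((q b + q (flipv b))/2)
      = (q b + q (flipv b))/2 * Real.logb 2 (q b + q (flipv b)) - (q b + q (flipv b))/2 := by
    intro b
    by_cases h : q b + q (flipv b) = 0
    · simp [h]
    · rw [Real.logb_div h (by norm_num), Real.logb_self_eq_one (by norm_num)]; ring
  have qL : ∀ b, q b * Real.logb 2 (q b + q (flipv b)) = q b * Real.logb 2 (q b) := by
    intro b
    by_cases h : q b = 0
    · simp [h]
    · have hb0 : q (flipv b) = 0 := by
        apply hsupp
        have hb : b ⟨0, hN⟩ = false := by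
          cases hb : b ⟨0, hN⟩
          · rfl
          · exact absurd (hsupp b hb) h
        simp [flipv, hb]
      rw [hb0, add_zero]
  have hB : ∑ b, (q b + q (flipv b))/2 * Real.logb 2 (q b + q (flipv b))
      = ∑ b, q b * Real.logb 2 (q b) := by
    have e1 : ∀ b, (q b + q (flipv b))/2 * Real.logb 2 (q b + q (flipv b))
        = q b * Real.logb 2 (q b + q (flipv b)) / 2
          + q (flipv b) * Real.logb 2 (q (flipv b) + q (flipv (flipv b))) / 2 := by
      intro b
      rw [flipv_flipv, add_comm (q (flipv b)) (q b)]
      ring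
    rw [Finset.sum_congr rfl (fun b _ => e1 b), Finset.sum_add_distrib,
      sum_flipv (fun b => q b * Real.logb 2 (q b + q (flipv b)) / 2)]
    rw [← Finset.sum_add_distrib]
    have : ∀ b, q b * Real.logb 2 (q b + q (flipv b)) / 2
        + q b * Real.logb 2 (q b + q (flipv b)) / 2 = q b * Real.logb 2 (q b) := by
      intro b; rw [← qL b]; ring
    exact Finset.sum_congr rfl (fun b _ => this b)
  unfold shannon
  rw [Finset.sum_congr rfl (fun b _ => stepA b), Finset.sum_sub_distrib, hB,
    ← Finset.sum_div, hg2]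
  ring

noncomputable def grv (l b : Fin N → Bool) : ℝ :=
  (Real.sqrt 2)⁻¹ * ((if b = l then 1 else 0) + (if b = flipv l then 1 else 0))

lemma ghzPlus_eq (l b : Fin N → Bool) : ghzPlus N l b = ((grv l b : ℝ) : ℂ) := by
  unfold ghzPlus grv flipv
  push_cast [apply_ite (Complex.ofReal)]
  norm_num

noncomputable def epsv (hN : 0 < N) (l : Fin N → Bool) : ℝ := if l ⟨0, hN⟩ then -1 else 1

lemma eps_sq (hN : 0 < N) (l : Fin N → Bool) : epsv hN l * epsv hN l = 1 := by
  unfold epsv; split <;> norm_num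

lemma eps_flip (hN : 0 < N) (m : Fin N → Bool) : epsv hN (flipv m) + epsv hN m = 0 := by
  unfold epsv flipv
  cases h : m ⟨0, hN⟩ <;> simp [h]

noncomputable def psiR (hN : 0 < N) (l b : Fin N → Bool) : ℝ :=
  (Real.sqrt 2)⁻¹ * ((if b = l then 1 else 0) + epsv hN l * (if b = flipv l then 1 else 0))

lemma hc : (Real.sqrt 2)⁻¹ * (Real.sqrt 2)⁻¹ = 1/2 := by
  rw [← mul_inv, Real.mul_self_sqrt (by norm_num)]; norm_num

lemma sum_dd (x y : Fin N → Bool) :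
    ∑ b, (if b = x then (1:ℝ) else 0) * (if b = y then 1 else 0) = if x = y then 1 else 0 := by
  have : ∀ b : Fin N → Bool, (if b = x then (1:ℝ) else 0) * (if b = y then 1 else 0)
      = if b = x then (if x = y then (1:ℝ) else 0) else 0 := by
    intro b
    by_cases h : b = x
    · subst h; simp
    · simp [h]
  rw [Finset.sum_congr rfl (fun b _ => this b), Finset.sum_ite_eq' Finset.univ x]
  simp

lemma orth (hN : 0 < N) (l m : Fin N → Bool) :
    ∑ b, psiR hN l b * psiR hN m b = if l = m then 1 else 0 := by
  have expand : ∀ b, psiR hN l b * psiR hN m b =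
      (Real.sqrt 2)⁻¹ * (Real.sqrt 2)⁻¹ *
        ((if b = l then (1:ℝ) else 0) * (if b = m then 1 else 0)
         + (epsv hN m * ((if b = l then (1:ℝ) else 0) * (if b = flipv m then 1 else 0))
         + (epsv hN l * ((if b = flipv l then (1:ℝ) else 0) * (if b = m then 1 else 0))
         + epsv hN l * epsv hN m *
             ((if b = flipv l then (1:ℝ) else 0) * (if b = flipv m then 1 else 0))))) := by
    intro b; unfold psiR; ring
  rw [Finset.sum_congr rfl (fun b _ => expand b), ← Finset.mul_sum,
    Finset.sum_add_distrib, Finset.sum_add_distrib, Finset.sum_add_distrib,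
    ← Finset.mul_sum, ← Finset.mul_sum, ← Finset.mul_sum,
    sum_dd, sum_dd, sum_dd, sum_dd, hc]
  by_cases hlm : l = m
  · subst hlm
    rw [if_pos rfl, if_pos rfl, if_neg (Ne.symm (flipv_ne hN l)), if_neg (flipv_ne hN l),
      eps_sq]
    norm_num
  · by_cases h2 : l = flipv m
    · subst h2
      rw [if_neg hlm, if_pos rfl, if_pos (flipv_flipv m), flipv_flipv,
        if_neg (Ne.symm (flipv_ne hN m))]
      ring_nf
      linarith [eps_flip hN m]
    · have h3 : flipv l ≠ m := fun h => h2 ((eq_flipv_iff l m).mpr h)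
      have h4 : flipv l ≠ flipv m := fun h => hlm (flipv_bij.1 h)
      rw [if_neg hlm, if_neg h2, if_neg h3, if_neg h4]
      norm_num


end Stmt11Aux

namespace Part2
open Stmt11Aux
variable {N : ℕ}

noncomputable def Umat (hN : 0 < N) : Matrix (Fin N → Bool) (Fin N → Bool) ℂ :=
  Matrix.of fun b l => ((psiR hN l b : ℝ) : ℂ)

lemma Umat_unitary (hN : 0 < N) : Umat hN * star (Umat hN) = 1 := by
  rw [mul_eq_one_comm]
  ext l m
  rw [Matrix.mul_apply, Matrix.one_apply]
  have key : ∀ b, (star (Umat hN)) l b * Umat hN b m = ((psiR hN l b * psiR hN m b : ℝ) : ℂ) := by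
    intro b
    rw [Matrix.star_apply]
    simp only [Umat, Matrix.of_apply]
    rw [Complex.star_def, Complex.conj_ofReal]
    push_cast
    ring
  rw [Finset.sum_congr rfl (fun b _ => key b), ← Complex.ofReal_sum, orth hN l m]
  split <;> simp

lemma rho_decomp (hN : 0 < N) (q : (Fin N → Bool) → ℝ)
    (hsupp : ∀ l : Fin N → Bool, l ⟨0, hN⟩ = true → q l = 0) :
    (Matrix.of fun b b' => ∑ l, (q l : ℂ) * ghzPlus N l b * star (ghzPlus N l b'))
      = Umat hN * Matrix.diagonal (fun l => ((q l : ℝ) : ℂ)) * star (Umat hN) := by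
  ext b b'
  rw [Matrix.of_apply, Matrix.mul_apply]
  refine Finset.sum_congr rfl fun l _ => ?_
  rw [Matrix.mul_diagonal, Matrix.star_apply]
  simp only [Umat, Matrix.of_apply]
  simp only [Complex.star_def, Complex.conj_ofReal, ghzPlus_eq]
  by_cases hq : q l = 0
  · simp [hq]
  · have hl : epsv hN l = 1 := by
      unfold epsv
      rw [if_neg (fun h => hq (hsupp l h))]
    have hpsi : ∀ c, psiR hN l c = grv l c := by
      intro c; unfold psiR grv; rw [hl, one_mul]
    rw [hpsi, hpsi]
    push_cast
    ring

lemma diag_entry (hN : 0 < N) (q : (Fin N → Bool) → ℝ) (b : Fin N → Bool) :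
    (((Matrix.of fun b b' => ∑ l, (q l : ℂ) * ghzPlus N l b * star (ghzPlus N l b'))
        : Matrix (Fin N → Bool) (Fin N → Bool) ℂ) b b).re
      = (q b + q (flipv b)) / 2 := by
  rw [Matrix.of_apply]
  have key : ∀ l, (q l : ℂ) * ghzPlus N l b * star (ghzPlus N l b)
      = (((if b = l then q l else 0)/2 + (if b = flipv l then q l else 0)/2 : ℝ) : ℂ) := by
    intro l
    rw [ghzPlus_eq, Complex.star_def, Complex.conj_ofReal]
    have hgr : grv l b * grv l b
        = (if b = l then (1:ℝ) else 0)/2 + (if b = flipv l then (1:ℝ) else 0)/2 := by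
      unfold grv
      by_cases h1 : b = l
      · have h2 : b ≠ flipv l := fun h => flipv_ne hN l (h1 ▸ h.symm)
        rw [if_pos h1, if_neg h2]
        rw [show (Real.sqrt 2)⁻¹ * ((1:ℝ) + 0) * ((Real.sqrt 2)⁻¹ * (1 + 0))
            = (Real.sqrt 2)⁻¹ * (Real.sqrt 2)⁻¹ from by ring, hc]
        norm_num
      · by_cases h2 : b = flipv l
        · rw [if_neg h1, if_pos h2]
          rw [show (Real.sqrt 2)⁻¹ * ((0:ℝ) + 1) * ((Real.sqrt 2)⁻¹ * (0 + 1))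
              = (Real.sqrt 2)⁻¹ * (Real.sqrt 2)⁻¹ from by ring, hc]
          norm_num
        · rw [if_neg h1, if_neg h2]
          norm_num
    have : q l * (grv l b * grv l b)
        = (if b = l then q l else 0)/2 + (if b = flipv l then q l else 0)/2 := by
      rw [hgr]
      split_ifs <;> ring
    rw [show ((q l : ℝ) : ℂ) * (grv l b : ℝ) * (grv l b : ℝ)
        = ((q l * (grv l b * grv l b) : ℝ) : ℂ) from by push_cast; ring, this]
  rw [Finset.sum_congr rfl (fun l _ => key l), ← Complex.ofReal_sum, Complex.ofReal_re]
  rw [Finset.sum_add_distrib, ← Finset.sum_div, ← Finset.sum_div]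
  have e2 : ∀ l, (if b = flipv l then q l else 0) = (if flipv b = l then q l else 0) := by
    intro l
    exact if_congr (eq_flipv_iff b l) rfl rfl
  rw [Finset.sum_congr rfl (fun l _ => e2 l), Finset.sum_ite_eq Finset.univ b q,
    Finset.sum_ite_eq Finset.univ (flipv b) q]
  simp
  ring

end Part2


/-- Any mixture of the `plus` GHZ basis states (labels with `l₁ = 0`)
has relative entropy of coherence equal to `1` in the computational basis. -/
theorem stmt11 (N : ℕ) (hN : 2 ≤ N) (q : (Fin N → Bool) → ℝ)
    (hq0 : ∀ l, 0 ≤ q l) (hqsum : ∑ l, q l = 1)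
    (hsupp : ∀ l : Fin N → Bool, l ⟨0, by omega⟩ = true → q l = 0)
    (ρ : Matrix (Fin N → Bool) (Fin N → Bool) ℂ)
    (hρ : ρ = Matrix.of fun b b' =>
      ∑ l, (q l : ℂ) * ghzPlus N l b * star (ghzPlus N l b')) :
    ∀ h : ρ.IsHermitian,
      shannon (fun b => (ρ b b).re) - shannon h.eigenvalues = 1 := by
  
  intro h
  have h0 : 0 < N := by omega
  have hsupp' : ∀ l : Fin N → Bool, l ⟨0, h0⟩ = true → q l = 0 := fun l hl => hsupp l hl
  have hdecomp : ρ = Part2.Umat h0 * Matrix.diagonal (fun l => ((q l : ℝ) : ℂ))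
      * star (Part2.Umat h0) := by
    rw [hρ]; exact Part2.rho_decomp h0 q hsupp'
  have hms : Finset.univ.val.map q = Finset.univ.val.map h.eigenvalues :=
    Stmt11Aux.eigen_ms h (Part2.Umat h0) (Part2.Umat_unitary h0) q hdecomp
  have h1 : shannon h.eigenvalues = shannon q :=
    (Stmt11Aux.shannon_eq_of_multiset hms).symm
  have h2 : shannon (fun b => (ρ b b).re) = shannon q + 1 := by
    have hd : (fun b => (ρ b b).re) = fun b => (q b + q (Stmt11Aux.flipv b)) / 2 := by
      funext b; rw [hρ]; exact Part2.diag_entry h0 q b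
    rw [hd]
    exact Stmt11Aux.shannon_half h0 q hqsum hsupp'
  rw [h2, h1]; ring
end
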